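/- arXiv:2410.16435 — 7 statements merged into one kernel-verified Lean document; each statement's English description precedes it below -/
import Mathlib

section
/- Let q ∈ (0,1), a ≠ 0, b < 0 with |a| < |b|, and set κ := -log(|b/a|)/log(1/q) < 0, α := |a/b| ∈ (0,1), c := log q < 0. Let φ : [0,∞) → ℝ be continuous and let z be a solution of the forced pantograph equation z'(t) = a·z(q·t) + b·z(t) + φ(t). Then there exists s₀* > 0 such that for every s₀ ≥ s₀* the following holds: with I_n := [s₀ - n·c, s₀ - (n+1)·c] and K_n := sup_{s ∈ I_n} e^{-κ s}|z(e^s)| for n ≥ 0, for every sequence (ε_n) of positive reals satisfying sup_{s ∈ I_{n+1}} |φ(e^s)| ≤ ε_{n+1} for all n ≥ 0, if the series Σ_{n≥1} ε_n/α^n converges, then there is a constant K* > 0 with K_n ≤ K* for all n, and z(t) = O(t^κ) as t → ∞. -/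
set_option maxHeartbeats 2000000

open Real Filter Set

private lemma pantograph_core
    (q a b κ : ℝ) (hq0 : 0 < q) (hq1 : q < 1) (hb : b < 0)
    (hqκ : |a| * q ^ κ = |b|) (hκneg : κ < 0)
    (φ z : ℝ → ℝ) (hφ : ContinuousOn φ (Set.Ici 0))
    (hzc : ContinuousOn z (Set.Ici 0))
    (hz : ∀ t > 0, HasDerivAt z (a * z (q * t) + b * z t + φ t) t)
    (t₁ M ε : ℝ) (ht₁ : 0 < t₁) (hM : 0 ≤ M) (hε : 0 ≤ ε)
    (hprev : ∀ u ∈ Set.Icc (q * t₁) t₁, |z u| ≤ M * u ^ κ)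
    (hφb : ∀ u ∈ Set.Icc t₁ (t₁ / q), |φ u| ≤ ε) :
    ∀ t ∈ Set.Icc t₁ (t₁ / q), |z t| ≤ M * t ^ κ + (M * |κ| * t₁ ^ (κ - 1) + ε) / |b| := by
  intro t ht
  obtain ⟨ht1, ht2⟩ := ht
  have hbne : b ≠ 0 := ne_of_lt hb
  have hbpos : 0 < -b := neg_pos.mpr hb
  have ht0 : 0 < t := lt_of_lt_of_le ht₁ ht1
  have hqne : q ≠ 0 := ne_of_gt hq0
  have hsub0 : Set.Icc t₁ t ⊆ Set.Ici (0:ℝ) := fun u hu => le_trans ht₁.le hu.1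
  have cexp : Continuous fun u : ℝ => Real.exp (-(b * u)) :=
    Real.continuous_exp.comp ((continuous_const.mul continuous_id).neg)
  have contz : ContinuousOn (fun u => z (q * u)) (Set.Icc t₁ t) := by
    apply hzc.comp (continuous_const.mul continuous_id).continuousOn
    intro u hu
    exact mul_nonneg hq0.le (le_trans ht₁.le hu.1)
  have contφ : ContinuousOn φ (Set.Icc t₁ t) := hφ.mono hsub0
  have contpow : ContinuousOn (fun u : ℝ => u ^ κ) (Set.Icc t₁ t) := by
    apply ContinuousOn.rpow_const continuousOn_id
    intro u hu; exact Or.inl (ne_of_gt (lt_of_lt_of_le ht₁ hu.1))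
  have contpow' : ContinuousOn (fun u : ℝ => u ^ (κ - 1)) (Set.Icc t₁ t) := by
    apply ContinuousOn.rpow_const continuousOn_id
    intro u hu; exact Or.inl (ne_of_gt (lt_of_lt_of_le ht₁ hu.1))
  have hIcc : Set.uIcc t₁ t = Set.Icc t₁ t := Set.uIcc_of_le ht1
  have if1 : IntervalIntegrable (fun u => Real.exp (-(b*u)) * (a * z (q*u) + φ u))
      MeasureTheory.volume t₁ t := by
    apply ContinuousOn.intervalIntegrable
    rw [hIcc]
    exact cexp.continuousOn.mul ((continuousOn_const.mul contz).add contφ)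
  have if2 : IntervalIntegrable (fun u => Real.exp (-(b*u)) * u ^ κ)
      MeasureTheory.volume t₁ t := by
    apply ContinuousOn.intervalIntegrable; rw [hIcc]; exact cexp.continuousOn.mul contpow
  have if3 : IntervalIntegrable (fun u => Real.exp (-(b*u)) * u ^ (κ-1))
      MeasureTheory.volume t₁ t := by
    apply ContinuousOn.intervalIntegrable; rw [hIcc]; exact cexp.continuousOn.mul contpow'
  have if4 : IntervalIntegrable (fun u => Real.exp (-(b*u))) MeasureTheory.volume t₁ t :=
    cexp.intervalIntegrable t₁ t
  have hde : ∀ u : ℝ, HasDerivAt (fun u : ℝ => Real.exp (-(b*u)))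
      (Real.exp (-(b*u)) * (-b)) u := by
    intro u
    have h0 : HasDerivAt (fun u : ℝ => -(b*u)) (-b) u := by
      simpa using ((hasDerivAt_id u).const_mul (-b))
    exact h0.exp
  -- FTC 1
  have eq1 : ∫ u in t₁..t, Real.exp (-(b*u)) * (a * z (q*u) + φ u)
      = Real.exp (-(b*t)) * z t - Real.exp (-(b*t₁)) * z t₁ := by
    apply intervalIntegral.integral_eq_sub_of_hasDerivAt _ if1
    intro u hu
    rw [hIcc] at hu
    have hu0 : 0 < u := lt_of_lt_of_le ht₁ hu.1
    have h2 := (hde u).mul (hz u hu0)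
    exact h2.congr_deriv (by ring)
  -- FTC 2
  have eq2 : ∫ u in t₁..t,
      ((-b) * (Real.exp (-(b*u)) * u ^ κ) + κ * (Real.exp (-(b*u)) * u ^ (κ-1)))
      = Real.exp (-(b*t)) * t ^ κ - Real.exp (-(b*t₁)) * t₁ ^ κ := by
    apply intervalIntegral.integral_eq_sub_of_hasDerivAt _
      ((if2.const_mul (-b)).add (if3.const_mul κ))
    intro u hu
    rw [hIcc] at hu
    have hu0 : 0 < u := lt_of_lt_of_le ht₁ hu.1
    have hp : HasDerivAt (fun u : ℝ => u ^ κ) (κ * u ^ (κ-1)) u :=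
      Real.hasDerivAt_rpow_const (Or.inl (ne_of_gt hu0))
    have h2 := (hde u).mul hp
    exact h2.congr_deriv (by ring)
  -- FTC 3
  have eq3 : ∫ u in t₁..t, Real.exp (-(b*u))
      = Real.exp (-(b*t)) / (-b) - Real.exp (-(b*t₁)) / (-b) := by
    apply intervalIntegral.integral_eq_sub_of_hasDerivAt _ if4
    intro u _
    have h2 := (hde u).div_const (-b)
    exact h2.congr_deriv (by rw [mul_div_assoc, div_self (neg_ne_zero.mpr hbne), mul_one])
  set A : ℝ := Real.exp (-(b*t)) with hA
  set A₁ : ℝ := Real.exp (-(b*t₁)) with hA₁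
  set J₁ : ℝ := ∫ u in t₁..t, Real.exp (-(b*u)) * u ^ κ with hJ₁
  set J₁' : ℝ := ∫ u in t₁..t, Real.exp (-(b*u)) * u ^ (κ-1) with hJ₁'
  set J₂ : ℝ := ∫ u in t₁..t, Real.exp (-(b*u)) with hJ₂
  have eq2' : (-b) * J₁ + κ * J₁' = A * t ^ κ - A₁ * t₁ ^ κ := by
    rw [hJ₁, hJ₁', ← intervalIntegral.integral_const_mul, ← intervalIntegral.integral_const_mul,
      ← intervalIntegral.integral_add (if2.const_mul (-b)) (if3.const_mul κ)]
    exact eq2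
  have hJ₂nonneg : 0 ≤ J₂ :=
    intervalIntegral.integral_nonneg ht1 (fun u _ => (Real.exp_pos _).le)
  have hJ₂le : J₂ ≤ A / (-b) := by
    rw [eq3]
    have : 0 ≤ A₁ / (-b) := div_nonneg (Real.exp_pos _).le hbpos.le
    linarith
  have hJ₁'le : J₁' ≤ t₁ ^ (κ-1) * J₂ := by
    have h : J₁' ≤ ∫ u in t₁..t, Real.exp (-(b*u)) * t₁ ^ (κ-1) := by
      apply intervalIntegral.integral_mono_on ht1 if3 (if4.mul_const _)
      intro u hu
      exact mul_le_mul_of_nonneg_left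
        (Real.rpow_le_rpow_of_nonpos ht₁ hu.1 (by linarith)) (Real.exp_pos _).le
    rwa [intervalIntegral.integral_mul_const, mul_comm] at h
  -- bound on forcing integral
  have habs : |∫ u in t₁..t, Real.exp (-(b*u)) * (a * z (q*u) + φ u)|
      ≤ (|b| * M) * J₁ + ε * J₂ := by
    have h1 : |∫ u in t₁..t, Real.exp (-(b*u)) * (a * z (q*u) + φ u)|
        ≤ ∫ u in t₁..t, |Real.exp (-(b*u)) * (a * z (q*u) + φ u)| :=
      intervalIntegral.abs_integral_le_integral_abs ht1
    have h2 : ∫ u in t₁..t, |Real.exp (-(b*u)) * (a * z (q*u) + φ u)|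
        ≤ ∫ u in t₁..t, ((|b| * M) * (Real.exp (-(b*u)) * u ^ κ) + ε * Real.exp (-(b*u))) := by
      apply intervalIntegral.integral_mono_on ht1 if1.abs
        ((if2.const_mul _).add (if4.const_mul ε))
      intro u hu
      have hu0 : 0 < u := lt_of_lt_of_le ht₁ hu.1
      have hmem : q * u ∈ Set.Icc (q * t₁) t₁ := by
        constructor
        · exact mul_le_mul_of_nonneg_left hu.1 hq0.le
        · have := mul_le_mul_of_nonneg_left (le_trans hu.2 ht2) hq0.le
          calc q * u ≤ q * (t₁ / q) := this
            _ = t₁ := by field_simp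
      have h3 : |z (q*u)| ≤ M * (q*u) ^ κ := hprev _ hmem
      have h4 : (q*u) ^ κ = q ^ κ * u ^ κ := Real.mul_rpow hq0.le hu0.le
      have h5 : |φ u| ≤ ε := hφb u ⟨hu.1, le_trans hu.2 ht2⟩
      have huk : (0:ℝ) ≤ u ^ κ := Real.rpow_nonneg hu0.le κ
      have h6 : |a * z (q*u) + φ u| ≤ |b| * M * u ^ κ + ε := by
        calc |a * z (q*u) + φ u| ≤ |a| * |z (q*u)| + |φ u| := by
              rw [← abs_mul]; exact abs_add_le _ _
          _ ≤ |a| * (M * (q ^ κ * u ^ κ)) + ε := by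
              apply add_le_add _ h5
              rw [h4] at h3
              exact mul_le_mul_of_nonneg_left h3 (abs_nonneg a)
          _ = (|a| * q ^ κ) * M * u ^ κ + ε := by ring
          _ = |b| * M * u ^ κ + ε := by rw [hqκ]
      calc |Real.exp (-(b*u)) * (a * z (q*u) + φ u)|
          = Real.exp (-(b*u)) * |a * z (q*u) + φ u| := by
            rw [abs_mul, abs_of_pos (Real.exp_pos _)]
        _ ≤ Real.exp (-(b*u)) * (|b| * M * u ^ κ + ε) :=
            mul_le_mul_of_nonneg_left h6 (Real.exp_pos _).le
        _ = (|b| * M) * (Real.exp (-(b*u)) * u ^ κ) + ε * Real.exp (-(b*u)) := by ring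
    have h7 : ∫ u in t₁..t, ((|b| * M) * (Real.exp (-(b*u)) * u ^ κ) + ε * Real.exp (-(b*u)))
        = (|b| * M) * J₁ + ε * J₂ := by
      rw [intervalIntegral.integral_add (if2.const_mul _) (if4.const_mul ε),
        intervalIntegral.integral_const_mul, intervalIntegral.integral_const_mul]
    linarith [h1.trans h2]
  -- conclusion
  have hzt₁ : |z t₁| ≤ M * t₁ ^ κ := by
    apply hprev
    constructor
    · nlinarith
    · exact le_refl t₁
  have key : A * |z t| ≤ A₁ * (M * t₁ ^ κ) + ((|b| * M) * J₁ + ε * J₂) := by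
    have e1 : A * z t = A₁ * z t₁ + ∫ u in t₁..t, Real.exp (-(b*u)) * (a * z (q*u) + φ u) := by
      rw [eq1]; ring
    calc A * |z t| = |A * z t| := by rw [abs_mul, abs_of_pos (Real.exp_pos _)]
      _ = |A₁ * z t₁ + ∫ u in t₁..t, Real.exp (-(b*u)) * (a * z (q*u) + φ u)| := by rw [e1]
      _ ≤ |A₁ * z t₁| + |∫ u in t₁..t, Real.exp (-(b*u)) * (a * z (q*u) + φ u)| := abs_add_le _ _
      _ ≤ A₁ * (M * t₁ ^ κ) + ((|b| * M) * J₁ + ε * J₂) := by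
          apply add_le_add _ habs
          rw [abs_mul, abs_of_pos (Real.exp_pos _)]
          exact mul_le_mul_of_nonneg_left hzt₁ (Real.exp_pos _).le
  have hκabs : |κ| = -κ := abs_of_neg hκneg
  have hbabs : |b| = -b := abs_of_neg hb
  have ht₁κ : (0:ℝ) ≤ t₁ ^ (κ-1) := Real.rpow_nonneg ht₁.le _
  -- from eq2': |b| * M * J₁ = M * (A t^κ - A₁ t₁^κ) - M * κ * J₁'
  have p1 : (|b| * M) * J₁ = M * (A * t ^ κ - A₁ * t₁ ^ κ) - M * κ * J₁' := by
    rw [hbabs]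
    linear_combination M * eq2'
  have p2 : - (M * κ * J₁') ≤ M * (-κ) * (t₁ ^ (κ-1) * J₂) := by
    have h := mul_le_mul_of_nonneg_left hJ₁'le (mul_nonneg hM (by linarith : (0:ℝ) ≤ -κ))
    linarith
  have p3 : (M * (-κ) * t₁ ^ (κ-1) + ε) * J₂ ≤ (M * (-κ) * t₁ ^ (κ-1) + ε) * (A / (-b)) := by
    exact mul_le_mul_of_nonneg_left hJ₂le
      (add_nonneg (mul_nonneg (mul_nonneg hM (by linarith)) ht₁κ) hε)
  have final : A * |z t| ≤ A * (M * t ^ κ + (M * (-κ) * t₁ ^ (κ-1) + ε) / (-b)) := by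
    have e2 : (M * (-κ) * t₁ ^ (κ-1) + ε) * (A / (-b))
        = A * ((M * (-κ) * t₁ ^ (κ-1) + ε) / (-b)) := by ring
    linarith [key, p1, p2, p3, e2]
  rw [hκabs, hbabs]
  exact le_of_mul_le_mul_left final (Real.exp_pos (-(b*t)))

private lemma pantograph_arith2 (e v w bb : ℝ) (n : ℕ) (hw : w ≠ 0) (hb : bb ≠ 0) :
    v * (e * (1/w) ^ (n+2)) / bb = (e / (w * bb)) * (v / w^(n+1)) := by
  rw [one_div, inv_pow]
  field_simp
  ring

private lemma pantograph_arith1 (k kk e v bb : ℝ) (hw : v ≠ 0) (hb : bb ≠ 0) (n : ℕ) (qq : ℝ) :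
    k * kk * (e * (1/v) * qq^(n+1)) / bb
      = (k * ((kk / (v * bb)) * qq^(n+1))) * e := by
  field_simp

/-- Fundamental lemma, summable case: for the forced pantograph equation
`z'(t) = a z(qt) + b z(t) + φ(t)` with `b < 0`, `|a| < |b|`, if the weighted
suprema of the forcing term are summable against `α^n`, then the dyadic suprema
`K_n` are bounded and `z(t) = O(t^κ)` as `t → ∞`. -/
theorem pantograph_fundamental_summable
    (q a b κ α c : ℝ)
    (hq0 : 0 < q) (hq1 : q < 1)
    (ha : a ≠ 0) (hb : b < 0) (hab : |a| < |b|)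
    (hκ : κ = -Real.log |b / a| / Real.log (1 / q))
    (hα : α = |a / b|) (hc : c = Real.log q)
    (φ z : ℝ → ℝ)
    (hφ : ContinuousOn φ (Set.Ici 0))
    (hzc : ContinuousOn z (Set.Ici 0))
    (hz : ∀ t > 0, HasDerivAt z (a * z (q * t) + b * z t + φ t) t) :
    ∃ s₀star > 0, ∀ s₀ ≥ s₀star, ∀ ε : ℕ → ℝ,
      (∀ n : ℕ, 0 < ε n) →
      (∀ n : ℕ, ∀ s ∈ Set.Icc (s₀ - ((n : ℝ) + 1) * c) (s₀ - ((n : ℝ) + 2) * c),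
        |φ (Real.exp s)| ≤ ε (n + 1)) →
      Summable (fun n : ℕ => ε n / α ^ n) →
      ∃ Kstar > 0,
        (∀ n : ℕ, sSup ((fun s => Real.exp (-(κ * s)) * |z (Real.exp s)|) ''
            Set.Icc (s₀ - (n : ℝ) * c) (s₀ - ((n : ℝ) + 1) * c)) ≤ Kstar) ∧
        ∃ T > 0, ∃ K > 0, ∀ t ≥ T, |z t| ≤ K * t ^ κ := by
  have hbne : b ≠ 0 := ne_of_lt hb
  have hlogq : Real.log q < 0 := Real.log_neg hq0 hq1
  have hlogqne : Real.log q ≠ 0 := ne_of_lt hlogq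
  have hcneg : c < 0 := by rw [hc]; exact hlogq
  have hbabs : (0:ℝ) < |b| := abs_pos.mpr hbne
  have haabs : (0:ℝ) < |a| := abs_pos.mpr ha
  have hba1 : 1 < |b| / |a| := (one_lt_div haabs).mpr hab
  have hL : 0 < Real.log (|b| / |a|) := Real.log_pos hba1
  have hκc : κ * c = Real.log (|b| / |a|) := by
    rw [hκ, hc, one_div, Real.log_inv, abs_div]
    field_simp
  have hκcpos : 0 < κ * c := by rw [hκc]; exact hL
  have hκneg : κ < 0 := by
    by_contra h
    push_neg at h
    nlinarith [mul_nonneg h (neg_nonneg.mpr hcneg.le)]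
  have hexpc : Real.exp c = q := by rw [hc]; exact Real.exp_log hq0
  have hexpκc : Real.exp (κ * c) = |b| / |a| := by
    rw [hκc]; exact Real.exp_log (div_pos hbabs haabs)
  have hqκ' : |a| * q ^ κ = |b| := by
    have h1 : q ^ κ = |b| / |a| := by
      rw [Real.rpow_def_of_pos hq0, ← hc, mul_comm, hexpκc]
    rw [h1]; field_simp
  have hα0 : 0 < α := by rw [hα]; exact abs_pos.mpr (div_ne_zero ha hbne)
  have hαval : α = |a| / |b| := by rw [hα, abs_div]
  have hα1 : α < 1 := by rw [hαval]; exact (div_lt_one hbabs).mpr hab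
  have hβ : |b| / |a| = 1 / α := by rw [hαval, one_div_div]
  have hαne : α ≠ 0 := ne_of_gt hα0
  have habsbne : |b| ≠ 0 := ne_of_gt hbabs
  refine ⟨1, one_pos, ?_⟩
  intro s₀ hs₀ ε hεpos hεb hsum
  have hs₀0 : (0:ℝ) < s₀ := lt_of_lt_of_le one_pos hs₀
  set W : ℝ → ℝ := fun s => Real.exp (-(κ * s)) * |z (Real.exp s)| with hWdef
  set Kn : ℕ → ℝ := fun m =>
    sSup (W '' Set.Icc (s₀ - (m : ℝ) * c) (s₀ - ((m : ℝ) + 1) * c)) with hKn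
  have hIccne : ∀ m : ℕ,
      (Set.Icc (s₀ - (m:ℝ)*c) (s₀ - ((m:ℝ)+1)*c)).Nonempty :=
    fun m => Set.nonempty_Icc.mpr (by linarith)
  have hWcont : ContinuousOn W (Set.univ : Set ℝ) := by
    apply ContinuousOn.mul
    · exact (Real.continuous_exp.comp ((continuous_const.mul continuous_id).neg)).continuousOn
    · exact (hzc.comp Real.continuous_exp.continuousOn (fun s _ => (Real.exp_pos s).le)).abs
  have hbddA : ∀ m : ℕ,
      BddAbove (W '' Set.Icc (s₀ - (m:ℝ)*c) (s₀ - ((m:ℝ)+1)*c)) := fun m =>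
    (isCompact_Icc.image_of_continuousOn (hWcont.mono (Set.subset_univ _))).bddAbove
  have hmemK : ∀ (m : ℕ), ∀ s ∈ Set.Icc (s₀ - (m:ℝ)*c) (s₀ - ((m:ℝ)+1)*c),
      W s ≤ Kn m := by
    intro m s hs
    simp only [hKn]
    exact le_csSup (hbddA m) ⟨s, hs, rfl⟩
  have hKle : ∀ (m : ℕ) (B : ℝ),
      (∀ s ∈ Set.Icc (s₀ - (m:ℝ)*c) (s₀ - ((m:ℝ)+1)*c), W s ≤ B) → Kn m ≤ B := by
    intro m B h
    simp only [hKn]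
    apply csSup_le ((hIccne m).image W)
    rintro x ⟨s, hs, rfl⟩
    exact h s hs
  have hK0 : ∀ m, 0 ≤ Kn m := by
    intro m
    have hmem : (s₀ - (m:ℝ)*c) ∈ Set.Icc (s₀ - (m:ℝ)*c) (s₀ - ((m:ℝ)+1)*c) :=
      ⟨le_refl _, by linarith⟩
    have h := hmemK m _ hmem
    have h0 : 0 ≤ W (s₀ - (m:ℝ)*c) := by
      simp only [hWdef]
      positivity
    linarith
  have hexpq : ∀ x : ℝ, q * Real.exp x = Real.exp (x + c) := by
    intro x; rw [Real.exp_add, hexpc, mul_comm]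
  have hexpdivq : ∀ x : ℝ, Real.exp x / q = Real.exp (x - c) := by
    intro x; rw [Real.exp_sub, hexpc]
  set C : ℝ := |κ| / (α * |b|) with hCdef
  set D : ℝ := Real.exp (-(κ * s₀)) / (α * |b|) with hDdef
  have hC0 : 0 ≤ C := by rw [hCdef]; positivity
  have hD0 : 0 < D := by rw [hDdef]; positivity
  -- the key recursion
  have hrec : ∀ n : ℕ, Kn (n+1) ≤ Kn n * (1 + C * q ^ (n+1))
      + D * (ε (n+1) / α ^ (n+1)) := by
    intro n
    set t₁ : ℝ := Real.exp (s₀ - ((n:ℝ)+1)*c) with ht₁def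
    have ht₁pos : 0 < t₁ := Real.exp_pos _
    have hqt₁ : q * t₁ = Real.exp (s₀ - (n:ℝ)*c) := by
      rw [ht₁def, hexpq]; congr 1; ring
    have ht₁q : t₁ / q = Real.exp (s₀ - ((n:ℝ)+2)*c) := by
      rw [ht₁def, hexpdivq]; congr 1; ring
    have hprev : ∀ u ∈ Set.Icc (q * t₁) t₁, |z u| ≤ Kn n * u ^ κ := by
      intro u hu
      have hu0 : 0 < u := lt_of_lt_of_le (by positivity) hu.1
      have hlow : s₀ - (n:ℝ)*c ≤ Real.log u := by
        rw [Real.le_log_iff_exp_le hu0, ← hqt₁]; exact hu.1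
      have hhigh : Real.log u ≤ s₀ - ((n:ℝ)+1)*c := by
        rw [Real.log_le_iff_le_exp hu0, ← ht₁def]; exact hu.2
      have hm := hmemK n (Real.log u) ⟨hlow, hhigh⟩
      simp only [hWdef] at hm
      rw [Real.exp_log hu0] at hm
      have hrwp : u ^ κ = Real.exp (κ * Real.log u) := by
        rw [Real.rpow_def_of_pos hu0, mul_comm]
      calc |z u| = Real.exp (κ * Real.log u) * (Real.exp (-(κ * Real.log u)) * |z u|) := by
            rw [← mul_assoc, ← Real.exp_add]; simp
        _ ≤ Real.exp (κ * Real.log u) * Kn n :=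
            mul_le_mul_of_nonneg_left hm (Real.exp_pos _).le
        _ = Kn n * u ^ κ := by rw [hrwp]; ring
    have hφb' : ∀ u ∈ Set.Icc t₁ (t₁ / q), |φ u| ≤ ε (n+1) := by
      intro u hu
      have hu0 : 0 < u := lt_of_lt_of_le ht₁pos hu.1
      have hlow : s₀ - ((n:ℝ)+1)*c ≤ Real.log u := by
        rw [Real.le_log_iff_exp_le hu0, ← ht₁def]; exact hu.1
      have hhigh : Real.log u ≤ s₀ - ((n:ℝ)+2)*c := by
        rw [Real.log_le_iff_le_exp hu0, ← ht₁q]; exact hu.2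
      have h := hεb n (Real.log u) ⟨hlow, hhigh⟩
      rwa [Real.exp_log hu0] at h
    have hcore := pantograph_core q a b κ hq0 hq1 hb hqκ' hκneg φ z hφ hzc hz
      t₁ (Kn n) (ε (n+1)) ht₁pos (hK0 n) (hεpos (n+1)).le hprev hφb'
    apply hKle
    intro s hs
    obtain ⟨hs1, hs2⟩ := hs
    push_cast at hs1 hs2
    have htmem : Real.exp s ∈ Set.Icc t₁ (t₁ / q) := by
      constructor
      · rw [ht₁def]; exact Real.exp_le_exp.mpr (by linarith)
      · rw [ht₁q]; exact Real.exp_le_exp.mpr (by linarith)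
    have hzb := hcore (Real.exp s) htmem
    simp only [hWdef]
    have hE : Real.exp s ^ κ = Real.exp (κ * s) := by
      rw [Real.rpow_def_of_pos (Real.exp_pos s), Real.log_exp, mul_comm]
    have ht₁pow : t₁ ^ (κ - 1) = Real.exp ((s₀ - ((n:ℝ)+1)*c) * (κ - 1)) := by
      rw [ht₁def, Real.rpow_def_of_pos (Real.exp_pos _), Real.log_exp]
    set X : ℝ := Real.exp (-(κ * (s₀ - ((n:ℝ)+2)*c))) with hXdef
    have hXle : Real.exp (-(κ * s)) ≤ X := by
      rw [hXdef]
      apply Real.exp_le_exp.mpr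
      nlinarith [mul_nonneg (sub_nonneg.mpr hs2) (neg_nonneg.mpr hκneg.le)]
    have hKnn := hK0 n
    have hκa : (0:ℝ) ≤ |κ| := abs_nonneg κ
    have ht₁p : (0:ℝ) ≤ t₁ ^ (κ-1) := Real.rpow_nonneg ht₁pos.le _
    have hRnn : (0:ℝ) ≤ (Kn n * |κ| * t₁^(κ-1) + ε (n+1)) / |b| := by
      apply div_nonneg _ hbabs.le
      have := (hεpos (n+1)).le
      positivity
    have hmain : Real.exp (-(κ*s)) * |z (Real.exp s)|
        ≤ Kn n + X * ((Kn n * |κ| * t₁^(κ-1) + ε (n+1)) / |b|) := by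
      calc Real.exp (-(κ*s)) * |z (Real.exp s)|
          ≤ Real.exp (-(κ*s)) * (Kn n * Real.exp s ^ κ
              + (Kn n * |κ| * t₁^(κ-1) + ε (n+1)) / |b|) :=
            mul_le_mul_of_nonneg_left hzb (Real.exp_pos _).le
        _ = Kn n * (Real.exp (-(κ*s)) * Real.exp (κ*s))
              + Real.exp (-(κ*s)) * ((Kn n * |κ| * t₁^(κ-1) + ε (n+1)) / |b|) := by
            rw [hE]; ring
        _ = Kn n + Real.exp (-(κ*s)) * ((Kn n * |κ| * t₁^(κ-1) + ε (n+1)) / |b|) := by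
            rw [← Real.exp_add]; simp
        _ ≤ Kn n + X * ((Kn n * |κ| * t₁^(κ-1) + ε (n+1)) / |b|) :=
            add_le_add (le_refl _) (mul_le_mul_of_nonneg_right hXle hRnn)
    have hid1 : X * t₁ ^ (κ - 1) = Real.exp (-s₀) * (1/α) * q ^ (n+1) := by
      rw [hXdef, ht₁pow, ← Real.exp_add]
      have he : -(κ * (s₀ - ((n:ℝ)+2)*c)) + (s₀ - ((n:ℝ)+1)*c) * (κ - 1)
          = (κ * c) + (((n+1:ℕ):ℝ))*c + (-s₀) := by push_cast; ring
      rw [he, Real.exp_add, Real.exp_add, hexpκc, hβ, Real.exp_nat_mul, hexpc]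
      ring
    have hid2 : X = Real.exp (-(κ * s₀)) * (1/α) ^ (n+2) := by
      rw [hXdef]
      have he : -(κ * (s₀ - ((n:ℝ)+2)*c)) = -(κ*s₀) + ((n+2:ℕ):ℝ) * (κ * c) := by
        push_cast; ring
      rw [he, Real.exp_add, Real.exp_nat_mul, hexpκc, hβ]
    have hfirst : Kn n * |κ| * (X * t₁^(κ-1)) / |b| ≤ Kn n * (C * q^(n+1)) := by
      rw [hid1]
      have h1 : Kn n * |κ| * (Real.exp (-s₀) * (1/α) * q^(n+1)) / |b|
          = (Kn n * (C * q^(n+1))) * Real.exp (-s₀) := by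
        rw [hCdef]
        exact pantograph_arith1 _ _ _ _ _ hαne habsbne n q
      rw [h1]
      apply mul_le_of_le_one_right
      · positivity
      · exact Real.exp_le_one_iff.mpr (by linarith)
    have hsecond : ε (n+1) * X / |b| = D * (ε (n+1) / α^(n+1)) := by
      rw [hid2, hDdef]
      exact pantograph_arith2 _ _ _ _ n hαne habsbne
    have hsplit : X * ((Kn n * |κ| * t₁^(κ-1) + ε (n+1)) / |b|)
        = Kn n * |κ| * (X * t₁^(κ-1)) / |b| + ε (n+1) * X / |b| := by
      ring
    linarith [hmain, hfirst, hsecond.le, hsecond.ge, hsplit.le, hsplit.ge]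
  -- iterate the recursion
  set d : ℕ → ℝ := fun k => D * (ε k / α ^ k) with hddef
  have hd0 : ∀ k, 0 ≤ d k := fun k => by
    simp only [hddef]
    exact mul_nonneg hD0.le (div_nonneg (hεpos k).le (pow_nonneg hα0.le k))
  set P : ℕ → ℝ := fun m => ∏ j ∈ Finset.range m, (1 + C * q ^ (j+1)) with hPdef
  have hPsucc : ∀ m, P (m+1) = P m * (1 + C * q^(m+1)) := by
    intro m
    simp only [hPdef]
    exact Finset.prod_range_succ _ m
  have hP1 : ∀ m, 1 ≤ P m := by
    intro m
    induction m with
    | zero => simp [hPdef]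
    | succ m ih =>
      have hterm : (1:ℝ) ≤ 1 + C * q ^ (m+1) := by
        have : 0 ≤ C * q ^ (m+1) := mul_nonneg hC0 (pow_nonneg hq0.le _)
        linarith
      rw [hPsucc m]
      nlinarith [ih, hterm]
  have hPle : ∀ m, P m ≤ Real.exp (C * (1-q)⁻¹) := by
    intro m
    simp only [hPdef]
    calc ∏ j ∈ Finset.range m, (1 + C * q ^ (j+1))
        ≤ ∏ j ∈ Finset.range m, Real.exp (C * q^(j+1)) := by
          apply Finset.prod_le_prod
          · intro j _
            have : 0 ≤ C * q ^ (j+1) := mul_nonneg hC0 (pow_nonneg hq0.le _)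
            linarith
          · intro j _
            rw [add_comm]
            exact Real.add_one_le_exp _
      _ = Real.exp (∑ j ∈ Finset.range m, C * q^(j+1)) := (Real.exp_sum _ _).symm
      _ ≤ Real.exp (C * (1-q)⁻¹) := by
          apply Real.exp_le_exp.mpr
          rw [← Finset.mul_sum]
          apply mul_le_mul_of_nonneg_left _ hC0
          have h2 : ∑ j ∈ Finset.range m, q^j ≤ (1-q)⁻¹ := by
            have h := Summable.sum_le_tsum (Finset.range m)
              (fun i _ => pow_nonneg hq0.le i)
              (summable_geometric_of_lt_one hq0.le hq1)
            rwa [tsum_geometric_of_lt_one hq0.le hq1] at h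
          have h3 : ∀ j ∈ Finset.range m, q^(j+1) ≤ q^j := by
            intro j _
            rw [pow_succ]
            nlinarith [pow_pos hq0 j]
          calc ∑ j ∈ Finset.range m, q^(j+1) ≤ ∑ j ∈ Finset.range m, q^j :=
                Finset.sum_le_sum h3
            _ ≤ (1-q)⁻¹ := h2
  set S : ℝ := ∑' k, ε k / α ^ k with hSdef
  have hS0 : 0 < S := by
    simp only [hSdef]
    exact Summable.tsum_pos hsum (fun k => div_nonneg (hεpos k).le (pow_nonneg hα0.le k)) 0
      (div_pos (hεpos 0) (pow_pos hα0 0))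
  have hdsum : ∀ m, ∑ k ∈ Finset.range m, d k ≤ D * S := by
    intro m
    have h1 : ∑ k ∈ Finset.range m, (ε k / α^k) ≤ S := by
      simp only [hSdef]
      exact Summable.sum_le_tsum _ (fun i _ => div_nonneg (hεpos i).le (pow_nonneg hα0.le i)) hsum
    calc ∑ k ∈ Finset.range m, d k = D * ∑ k ∈ Finset.range m, (ε k / α^k) := by
          simp only [hddef]
          rw [Finset.mul_sum]
      _ ≤ D * S := mul_le_mul_of_nonneg_left h1 hD0.le
  have hind : ∀ n, Kn n ≤ P n * (Kn 0 + ∑ k ∈ Finset.range (n+1), d k) := by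
    intro n
    induction n with
    | zero =>
      have hP0 : P 0 = 1 := by simp [hPdef]
      rw [hP0, one_mul, Finset.sum_range_one]
      linarith [hd0 0]
    | succ n ih =>
      have hstep := hrec n
      have hstep' : Kn (n+1) ≤ Kn n * (1 + C * q ^ (n+1)) + d (n+1) := by
        simp only [hddef]
        exact hstep
      have hprodnn : (0:ℝ) ≤ 1 + C * q^(n+1) := by positivity
      have h2 : Kn n * (1 + C*q^(n+1))
          ≤ (P n * (Kn 0 + ∑ k ∈ Finset.range (n+1), d k)) * (1 + C*q^(n+1)) :=
        mul_le_mul_of_nonneg_right ih hprodnn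
      have h3 : (P n * (Kn 0 + ∑ k ∈ Finset.range (n+1), d k)) * (1+C*q^(n+1))
          = P (n+1) * (Kn 0 + ∑ k ∈ Finset.range (n+1), d k) := by
        rw [hPsucc]; ring
      have h4 : d (n+1) ≤ P (n+1) * d (n+1) := le_mul_of_one_le_left (hd0 _) (hP1 _)
      rw [Finset.sum_range_succ]
      nlinarith [hstep', h2, h3.le, h3.ge, h4]
  set E : ℝ := Real.exp (C * (1-q)⁻¹) with hEdef
  have hE0 : 0 < E := Real.exp_pos _
  set Kstar : ℝ := E * (Kn 0 + D * S) + 1 with hKstardef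
  have hKstarpos : 0 < Kstar := by
    have h1 : 0 ≤ E * (Kn 0 + D * S) :=
      mul_nonneg hE0.le (add_nonneg (hK0 0) (mul_nonneg hD0.le hS0.le))
    simp only [hKstardef]
    linarith
  have hKbound : ∀ n, Kn n ≤ Kstar := by
    intro n
    have h1 := hind n
    have hcnn : 0 ≤ Kn 0 + ∑ k ∈ Finset.range (n+1), d k :=
      add_nonneg (hK0 0) (Finset.sum_nonneg fun k _ => hd0 k)
    have h2 : P n * (Kn 0 + ∑ k ∈ Finset.range (n+1), d k) ≤ E * (Kn 0 + D * S) := by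
      apply mul_le_mul (hPle n) _ hcnn hE0.le
      linarith [hdsum (n+1)]
    simp only [hKstardef]
    linarith
  refine ⟨Kstar, hKstarpos, ?_, Real.exp s₀, Real.exp_pos s₀, Kstar, hKstarpos, ?_⟩
  · intro n
    have h := hKbound n
    simp only [hKn] at h
    exact h
  · intro t htT
    have ht0 : 0 < t := lt_of_lt_of_le (Real.exp_pos s₀) htT
    have hss₀ : s₀ ≤ Real.log t := (Real.le_log_iff_exp_le ht0).mpr htT
    set s : ℝ := Real.log t with hsdef
    set x : ℝ := (s - s₀) / (-c) with hxdef
    have hx0 : 0 ≤ x := by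
      rw [hxdef]
      exact div_nonneg (by linarith) (by linarith)
    set n : ℕ := ⌊x⌋₊ with hndef
    have hn1 : (n:ℝ) ≤ x := Nat.floor_le hx0
    have hn2 : x < n + 1 := Nat.lt_floor_add_one x
    rw [hxdef] at hn1 hn2
    have hc1 : (n:ℝ) * (-c) ≤ s - s₀ := (le_div_iff₀ (by linarith)).mp hn1
    have hc2 : s - s₀ < ((n:ℝ)+1) * (-c) := (div_lt_iff₀ (by linarith)).mp hn2
    have hsmem : s ∈ Set.Icc (s₀ - (n:ℝ)*c) (s₀ - ((n:ℝ)+1)*c) := ⟨by linarith, by linarith⟩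
    have h1 := hmemK n s hsmem
    have h2 := hKbound n
    have h3 : Real.exp (-(κ * s)) * |z t| ≤ Kstar := by
      have h4 := le_trans h1 h2
      simp only [hWdef] at h4
      rw [hsdef, Real.exp_log ht0] at h4
      rw [hsdef]
      exact h4
    have htκ : t ^ κ = Real.exp (κ * s) := by
      rw [hsdef, Real.rpow_def_of_pos ht0, mul_comm]
    calc |z t| = Real.exp (κ*s) * (Real.exp (-(κ*s)) * |z t|) := by
          rw [← mul_assoc, ← Real.exp_add]; simp
      _ ≤ Real.exp (κ*s) * Kstar := mul_le_mul_of_nonneg_left h3 (Real.exp_pos _).le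
      _ = Kstar * t ^ κ := by rw [htκ]; ring
end

section
/- Let q ∈ (0,1), a ≠ 0, b < 0 with |a| < |b|. Let φ : [0,∞) → ℝ be continuous and let z be a solution of the forced pantograph equation z'(t) = a·z(q·t) + b·z(t) + φ(t) for t > 0. If φ(t) → 0 as t → ∞, then z(t) → 0 as t → ∞. -/
open Real Filter Set

/-- One-sided Gronwall estimate for `z' = b z + g` with `b < 0`. -/
lemma pantograph_keyA {b K : ℝ} (hb : b < 0) {z g : ℝ → ℝ} {T t : ℝ} (hTt : T ≤ t)
    (hzc : ContinuousOn z (Icc T t))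
    (hz : ∀ u ∈ Ico T t, HasDerivWithinAt z (b * z u + g u) (Ici u) u)
    (hg : ∀ u ∈ Ico T t, |g u| ≤ K) :
    |z t| ≤ |z T| * exp (b * (t - T)) + K / (-b) * (1 - exp (b * (t - T))) := by
  have hKne : b ≠ 0 := hb.ne
  have hgb : gronwallBound (|z T|) b K (t - T)
      = |z T| * exp (b * (t - T)) + K / (-b) * (1 - exp (b * (t - T))) := by
    rw [gronwallBound_of_K_ne_0 hKne, div_neg]
    ring
  have h1 : z t ≤ gronwallBound (|z T|) b K (t - T) := by
    refine le_gronwallBound_of_liminf_deriv_right_le (f' := fun u => b * z u + g u) hzc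
      (fun x hx r hr => (hz x hx).liminf_right_slope_le hr) (le_abs_self _)
      (fun x hx => ?_) t ⟨hTt, le_rfl⟩
    have h := hg x hx
    have := le_abs_self (g x)
    show b * z x + g x ≤ b * z x + K
    linarith
  have h2 : -z t ≤ gronwallBound (|z T|) b K (t - T) := by
    refine le_gronwallBound_of_liminf_deriv_right_le (f := fun u => -z u)
      (f' := fun u => -(b * z u + g u)) hzc.neg
      (fun x hx r hr => ((hz x hx).neg).liminf_right_slope_le hr) (neg_le_abs _)
      (fun x hx => ?_) t ⟨hTt, le_rfl⟩
    have h := hg x hx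
    have := neg_abs_le (g x)
    show -(b * z x + g x) ≤ b * -z x + K
    linarith
  rw [← hgb]
  exact abs_le.2 ⟨by linarith, h1⟩

set_option maxHeartbeats 1000000 in
/-- If the forcing term of an asymptotically stable pantograph equation tends to
zero, so does every solution. -/
theorem pantograph_convergence_of_forcing_to_zero
    (q a b : ℝ)
    (hq0 : 0 < q) (hq1 : q < 1)
    (ha : a ≠ 0) (hb : b < 0) (hab : |a| < |b|)
    (φ z : ℝ → ℝ)
    (hφ : ContinuousOn φ (Set.Ici 0))
    (hzc : ContinuousOn z (Set.Ici 0))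
    (hz : ∀ t > 0, HasDerivAt z (a * z (q * t) + b * z t + φ t) t)
    (hφ0 : Tendsto φ atTop (nhds 0)) :
    Tendsto z atTop (nhds 0) := by
  set g : ℝ → ℝ := fun u => a * z (q * u) + φ u with hg_def
  have hbpos : (0:ℝ) < -b := by linarith
  have hab' : |a| < -b := by rwa [abs_of_neg hb] at hab
  have hderiv : ∀ u, 0 < u → HasDerivWithinAt z (b * z u + g u) (Ici u) u := by
    intro u hu
    have h := (hz u hu).hasDerivWithinAt (s := Ici u)
    have e : b * z u + g u = a * z (q * u) + b * z u + φ u := by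
      show b * z u + (a * z (q * u) + φ u) = _
      ring
    rw [e]; exact h
  set r : ℝ := |a| / (-b) with hr_def
  have hr1 : r < 1 := (div_lt_one hbpos).2 hab'
  have hr0 : 0 ≤ r := div_nonneg (abs_nonneg a) hbpos.le
  -- bound on φ
  obtain ⟨C, hC0, hCb⟩ : ∃ C, 0 ≤ C ∧ ∀ u ≥ (0:ℝ), |φ u| ≤ C := by
    have h1 : ∀ᶠ u in atTop, |φ u| ≤ 1 := by
      have h := hφ0.abs
      rw [abs_zero] at h
      exact (h.eventually_lt_const one_pos).mono fun u hu => hu.le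
    obtain ⟨T₀, hT₀⟩ := eventually_atTop.1 h1
    obtain ⟨C₁, hC₁⟩ := (isCompact_Icc (a := (0:ℝ)) (b := max T₀ 0)).exists_bound_of_continuousOn
      (hφ.mono Icc_subset_Ici_self)
    refine ⟨max C₁ 1, le_trans one_pos.le (le_max_right _ _), fun u hu => ?_⟩
    rcases le_or_gt u (max T₀ 0) with h | h
    · exact le_trans (by simpa [Real.norm_eq_abs] using hC₁ u ⟨hu, h⟩) (le_max_left _ _)
    · exact le_trans (hT₀ u (le_trans (le_max_left _ _) h.le)) (le_max_right _ _)
  -- global bound on z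
  obtain ⟨M, hM0, hM⟩ : ∃ M, 0 ≤ M ∧ ∀ t ≥ (0:ℝ), |z t| ≤ M := by
    refine ⟨max (|z 0|) (C / ((-b) * (1 - r))), le_max_of_le_left (abs_nonneg _), fun t ht => ?_⟩
    obtain ⟨u₀, hu₀mem, hu₀⟩ := isCompact_Icc.exists_isMaxOn (nonempty_Icc.2 ht)
      ((hzc.mono Icc_subset_Ici_self).abs)
    set B := |z u₀| with hB_def
    have hzB : ∀ s ∈ Icc (0:ℝ) t, |z s| ≤ B := fun s hs => hu₀ hs
    have htB : |z t| ≤ B := hzB t ⟨ht, le_rfl⟩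
    rcases eq_or_lt_of_le hu₀mem.1 with h0 | h0
    · refine htB.trans (le_max_of_le_left ?_)
      rw [hB_def, ← h0]
    · -- 0 < u₀
      have hT2 : u₀ / 2 ≤ u₀ := by linarith
      have hqmem : ∀ u ∈ Ico (u₀/2) u₀, q * u ∈ Icc (0:ℝ) t := by
        intro u hu
        have hu0 : 0 < u := lt_of_lt_of_le (by linarith) hu.1
        constructor
        · positivity
        · nlinarith [hu.2, hu₀mem.2]
      have hKb : ∀ u ∈ Ico (u₀/2) u₀, |g u| ≤ |a| * B + C := by
        intro u hu
        have hu0 : 0 < u := lt_of_lt_of_le (by linarith) hu.1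
        have h1 : |z (q*u)| ≤ B := hzB _ (hqmem u hu)
        have h2 : |φ u| ≤ C := hCb u (by positivity)
        calc |g u| ≤ |a * z (q*u)| + |φ u| := abs_add_le _ _
          _ = |a| * |z (q*u)| + |φ u| := by rw [abs_mul]
          _ ≤ |a| * B + C := by
              gcongr
      have key := pantograph_keyA hb hT2
        (hzc.mono (fun x hx => le_trans (by linarith : (0:ℝ) ≤ u₀/2) hx.1))
        (fun u hu => hderiv u (lt_of_lt_of_le (by linarith) hu.1)) hKb
      set e := exp (b * (u₀ - u₀/2)) with he_def
      have he1 : e < 1 := exp_lt_one_iff.2 (by nlinarith)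
      have he0 : 0 < e := exp_pos _
      have hzT : |z (u₀/2)| ≤ B := hzB _ ⟨by linarith, by linarith [hu₀mem.2]⟩
      -- key : B ≤ |z (u₀/2)| * e + (|a|*B + C)/(-b) * (1 - e)
      have hK0 : 0 ≤ |a| * B + C := by positivity
      have hstep : B * (1 - e) ≤ (|a| * B + C) / (-b) * (1 - e) := by
        have h5 : |z (u₀/2)| * e ≤ B * e := mul_le_mul_of_nonneg_right hzT he0.le
        nlinarith [key]
      have hstep2 : B ≤ (|a| * B + C) / (-b) :=
        le_of_mul_le_mul_right (by linarith [hstep]) (by linarith : (0:ℝ) < 1 - e)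
      have hBb : B * (-b) ≤ |a| * B + C := by
        rw [← le_div_iff₀ hbpos]; exact hstep2
      refine htB.trans (le_max_of_le_right ?_)
      have hDe : (-b) * (1 - r) = -b - |a| := by
        rw [hr_def, mul_sub, mul_one, mul_comm (-b) _, div_mul_cancel₀ _ hbpos.ne']
      have hD : 0 < (-b) * (1 - r) := by rw [hDe]; linarith
      rw [le_div_iff₀ hD]
      have hB0 : 0 ≤ B := abs_nonneg _
      nlinarith [hBb]
  -- iteration step
  have step : ∀ δ > (0:ℝ), ∀ c, 0 ≤ c → (∀ᶠ u in atTop, |z u| ≤ c) →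
      ∀ᶠ u in atTop, |z u| ≤ r * c + (1 - r) * δ / 2 := by
    intro δ hδ c hc hev
    set ε : ℝ := ((1 - r) * δ / 2) / (1/(-b) + 1) with hε_def
    have hden : (0:ℝ) < 1/(-b) + 1 := by positivity
    have hε : 0 < ε := div_pos (by nlinarith) hden
    have hεsum : ε / (-b) + ε = (1 - r) * δ / 2 := by
      have h1 : ε * (1/(-b) + 1) = (1 - r) * δ / 2 := div_mul_cancel₀ _ hden.ne'
      rw [← h1]; ring
    have hφe : ∀ᶠ u in atTop, |φ u| ≤ ε := by
      have h := hφ0.abs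
      rw [abs_zero] at h
      exact (h.eventually_lt_const hε).mono fun u hu => hu.le
    obtain ⟨T₁, hT₁⟩ := eventually_atTop.1 hφe
    obtain ⟨T₂, hT₂⟩ := eventually_atTop.1 hev
    set T : ℝ := max 1 (max T₁ (T₂ / q)) with hT_def
    have hT0 : (0:ℝ) < T := lt_of_lt_of_le one_pos (le_max_left _ _)
    have htrans : ∀ᶠ t in atTop, M * exp (b * (t - T)) ≤ ε := by
      have h1 : Tendsto (fun t : ℝ => (-b) * (t - T)) atTop atTop :=
        (tendsto_atTop_add_const_right atTop (-T) tendsto_id).const_mul_atTop hbpos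
      have h2 : Tendsto (fun t : ℝ => b * (t - T)) atTop atBot := by
        have := tendsto_neg_atTop_atBot.comp h1
        simpa [Function.comp_def, neg_mul] using this
      have h3 : Tendsto (fun t : ℝ => M * exp (b * (t - T))) atTop (nhds 0) := by
        have := (tendsto_exp_atBot.comp h2).const_mul M
        simpa using this
      exact (h3.eventually_lt_const hε).mono fun u hu => hu.le
    filter_upwards [htrans, eventually_ge_atTop T] with t h1 h2
    have hKb : ∀ u ∈ Ico T t, |g u| ≤ |a| * c + ε := by
      intro u hu
      have huT : T ≤ u := hu.1
      have hu1 : (1:ℝ) ≤ u := le_trans (le_max_left _ _) huT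
      have hqu : T₂ ≤ q * u := by
        have : T₂ / q ≤ u := le_trans (le_trans (le_max_right _ _) (le_max_right _ _)) huT
        calc T₂ = q * (T₂ / q) := by field_simp
          _ ≤ q * u := by gcongr
      have h3 : |z (q*u)| ≤ c := hT₂ _ hqu
      have h4 : |φ u| ≤ ε := hT₁ u (le_trans (le_trans (le_max_left _ _) (le_max_right _ _)) huT)
      calc |g u| ≤ |a * z (q*u)| + |φ u| := abs_add_le _ _
        _ = |a| * |z (q*u)| + |φ u| := by rw [abs_mul]
        _ ≤ |a| * c + ε := by gcongr
    have key := pantograph_keyA hb h2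
      (hzc.mono (fun x hx => le_trans hT0.le hx.1))
      (fun u hu => hderiv u (lt_of_lt_of_le hT0 hu.1)) hKb
    set e := exp (b * (t - T)) with he_def
    have he0 : 0 < e := exp_pos _
    have he1 : e ≤ 1 := exp_le_one_iff.2 (by nlinarith)
    have hzT : |z T| ≤ M := hM T hT0.le
    have hP : 0 ≤ (|a| * c + ε) / (-b) := by positivity
    have h5 : (|a| * c + ε) / (-b) * (1 - e) ≤ (|a| * c + ε) / (-b) := by nlinarith
    have h6 : |z T| * e ≤ M * e := mul_le_mul_of_nonneg_right hzT he0.le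
    have h7 : (|a| * c + ε) / (-b) = r * c + ε / (-b) := by
      rw [hr_def]; ring
    linarith [key]
  -- conclusion
  rw [Metric.tendsto_nhds]
  intro δ hδ
  have ind : ∀ n : ℕ, ∀ᶠ u in atTop, |z u| ≤ r^n * M + δ/2 := by
    intro n
    induction n with
    | zero =>
      filter_upwards [eventually_ge_atTop (0:ℝ)] with u hu
      have := hM u hu
      simp only [pow_zero, one_mul]
      linarith
    | succ n ih =>
      have hc : (0:ℝ) ≤ r^n * M + δ/2 := by positivity
      have h := step δ hδ _ hc ih
      refine h.mono fun u hu => ?_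
      have : r * (r^n * M + δ/2) + (1 - r) * δ / 2 = r^(n+1) * M + δ/2 := by ring
      linarith [this ▸ hu]
  have hpow : Tendsto (fun n : ℕ => r^n * M) atTop (nhds 0) := by
    have := (tendsto_pow_atTop_nhds_zero_of_lt_one hr0 hr1).mul_const M
    simpa using this
  obtain ⟨n, hn⟩ := (hpow.eventually_lt_const (half_pos hδ)).exists
  filter_upwards [ind n] with u hu
  rw [Real.dist_eq, sub_zero]
  calc |z u| ≤ r^n * M + δ/2 := hu
    _ < δ/2 + δ/2 := by linarith
    _ = δ := by ring
end

section
/- Let q ∈ (0,1), a ≠ 0, b < 0 with |a| < |b|. Let φ : [0,∞) → ℝ be continuous and let z be a solution of the forced pantograph equation z'(t) = a·z(q·t) + b·z(t) + φ(t) for t > 0. If φ is bounded on [0,∞), then z is bounded on [0,∞). -/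
open Real Filter Set Topology

/-- At a point with strictly negative derivative, there are nearby points on
the left where the function is strictly larger. -/
lemma left_gt_of_deriv_neg {z : ℝ → ℝ} {t0 d : ℝ} (h : HasDerivAt z d t0) (hd : d < 0)
    (ht0 : 0 < t0) : ∃ s, 0 < s ∧ s < t0 ∧ z t0 < z s := by
  have hs := hasDerivAt_iff_tendsto_slope.mp h
  have h1 : ∀ᶠ s in 𝓝[≠] t0, slope z t0 s < 0 := hs.eventually (Iio_mem_nhds hd)
  have hmono : 𝓝[<] t0 ≤ 𝓝[≠] t0 := nhdsWithin_mono _ fun x hx => ne_of_lt hx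
  have h2 : ∀ᶠ s in 𝓝[<] t0, slope z t0 s < 0 := h1.filter_mono hmono
  have h3 : Set.Ioo 0 t0 ∈ 𝓝[<] t0 := Ioo_mem_nhdsLT_of_mem ⟨ht0, le_rfl⟩
  obtain ⟨s, hslope, hs0, hst⟩ := (h2.and (eventually_of_mem h3 fun x hx => hx)).exists
  refine ⟨s, hs0, hst, ?_⟩
  have hne : s - t0 ≠ 0 := by linarith
  have : z s - z t0 = slope z t0 s * (s - t0) := by
    rw [slope_def_field]
    field_simp
  nlinarith

lemma left_lt_of_deriv_pos {z : ℝ → ℝ} {t0 d : ℝ} (h : HasDerivAt z d t0) (hd : 0 < d)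
    (ht0 : 0 < t0) : ∃ s, 0 < s ∧ s < t0 ∧ z s < z t0 := by
  obtain ⟨s, h1, h2, h3⟩ := left_gt_of_deriv_neg (h.neg) (by linarith) ht0
  exact ⟨s, h1, h2, by simpa using h3⟩

/-- If the forcing term of an asymptotically stable pantograph equation is
bounded on `[0,∞)`, then every solution is bounded on `[0,∞)`. -/
theorem pantograph_bounded_of_forcing_bounded
    (q a b : ℝ)
    (hq0 : 0 < q) (hq1 : q < 1)
    (ha : a ≠ 0) (hb : b < 0) (hab : |a| < |b|)
    (φ z : ℝ → ℝ)
    (hφ : ContinuousOn φ (Set.Ici 0))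
    (hzc : ContinuousOn z (Set.Ici 0))
    (hz : ∀ t > 0, HasDerivAt z (a * z (q * t) + b * z t + φ t) t)
    (hφbdd : ∃ M : ℝ, ∀ t ≥ (0 : ℝ), |φ t| ≤ M) :
    ∃ M : ℝ, ∀ t ≥ (0 : ℝ), |z t| ≤ M := by
  obtain ⟨M0, hM0⟩ := hφbdd
  have hM0nn : 0 ≤ M0 := le_trans (abs_nonneg _) (hM0 0 le_rfl)
  have hba : |a| < -b := by rwa [abs_of_neg hb] at hab
  set c : ℝ := -b - |a| with hc
  have hcpos : 0 < c := by simp only [hc]; linarith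
  set B : ℝ := max (|z 0|) (M0 / c) with hB
  have hzB : |z 0| ≤ B := le_max_left _ _
  have hMB : M0 ≤ c * B := by
    have h1 : M0 / c ≤ B := le_max_right _ _
    rw [div_le_iff₀ hcpos] at h1
    linarith [h1]
  have hBnn : 0 ≤ B := le_trans (abs_nonneg _) hzB
  refine ⟨B + 1, ?_⟩
  by_contra hcon
  push_neg at hcon
  obtain ⟨t1, ht1, hzt1⟩ := hcon
  set S : Set ℝ := Set.Ici 0 ∩ (fun t => |z t|) ⁻¹' Set.Ici (B + 1) with hS
  have hSne : S.Nonempty := ⟨t1, ht1, le_of_lt hzt1⟩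
  have hSbdd : BddBelow S := ⟨0, fun x hx => hx.1⟩
  have hSclosed : IsClosed S :=
    ContinuousOn.preimage_isClosed_of_isClosed hzc.abs isClosed_Ici isClosed_Ici
  set t0 := sInf S with ht0def
  have ht0S : t0 ∈ S := hSclosed.csInf_mem hSne hSbdd
  have ht0nn : 0 ≤ t0 := ht0S.1
  have ht0z : B + 1 ≤ |z t0| := ht0S.2
  have ht0pos : 0 < t0 := by
    rcases eq_or_lt_of_le ht0nn with h | h
    · exfalso; rw [← h] at ht0z; linarith
    · exact h
  have hlt : ∀ s, 0 ≤ s → s < t0 → |z s| < B + 1 := by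
    intro s hs hst
    by_contra hge; push_neg at hge
    exact absurd (csInf_le hSbdd ⟨hs, hge⟩) (not_le.mpr hst)
  have hqlt : q * t0 < t0 := by nlinarith
  have hqz : |z (q * t0)| < B + 1 := hlt _ (by positivity) hqlt
  have hder := hz t0 ht0pos
  have hφt0 : |φ t0| ≤ M0 := hM0 t0 ht0nn
  have haz : |a * z (q * t0)| ≤ |a| * (B + 1) := by
    rw [abs_mul]
    exact mul_le_mul_of_nonneg_left hqz.le (abs_nonneg a)
  have haz1 : a * z (q * t0) ≤ |a| * (B + 1) := le_trans (le_abs_self _) haz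
  have haz2 : -(|a| * (B + 1)) ≤ a * z (q * t0) := by
    have := neg_abs_le (a * z (q * t0)); linarith
  rcases abs_cases (z t0) with ⟨h1, h2⟩ | ⟨h1, h2⟩
  · -- z t0 ≥ B + 1 > 0
    have hzt0 : B + 1 ≤ z t0 := by rwa [h1] at ht0z
    have hd : a * z (q * t0) + b * z t0 + φ t0 < 0 := by
      have hb1 : b * z t0 ≤ b * (B + 1) := mul_le_mul_of_nonpos_left hzt0 hb.le
      have hφ1 : φ t0 ≤ M0 := le_trans (le_abs_self _) hφt0
      nlinarith
    obtain ⟨s, hs0, hst, hgt⟩ := left_gt_of_deriv_neg hder hd ht0pos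
    have := hlt s hs0.le hst
    have := le_abs_self (z s)
    linarith
  · -- z t0 ≤ -(B + 1)
    have hzt0 : z t0 ≤ -(B + 1) := by rw [h1] at ht0z; linarith
    have hd : 0 < a * z (q * t0) + b * z t0 + φ t0 := by
      have hb1 : b * (-(B + 1)) ≤ b * z t0 := mul_le_mul_of_nonpos_left hzt0 hb.le
      have hφ1 : -M0 ≤ φ t0 := by have := neg_abs_le (φ t0); linarith
      nlinarith
    obtain ⟨s, hs0, hst, hgt⟩ := left_lt_of_deriv_pos hder hd ht0pos
    have := hlt s hs0.le hst
    have := neg_abs_le (z s)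
    linarith
end

section
/- Let q ∈ (0,1), a ≠ 0, b < 0 with |a| < |b|. Let φ : [0,∞) → ℝ be continuous and let z be a solution of the forced pantograph equation z'(t) = a·z(q·t) + b·z(t) + φ(t) for t > 0. Let γ : [0,∞) → (0,∞) be continuously differentiable and non-decreasing. If φ(t) = O(γ(t)) as t → ∞, then z(t) = O(γ(t)) as t → ∞. -/
open Real Filter Set Topology

lemma helper_left {f : ℝ → ℝ} {x d : ℝ} (hx : 0 < x)
    (hf : HasDerivAt f d x) (h : ∀ t, 0 ≤ t → t < x → f t ≤ f x) : 0 ≤ d := by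
  rw [hasDerivAt_iff_tendsto_slope] at hf
  have hf' : Tendsto (slope f x) (𝓝[<] x) (𝓝 d) :=
    hf.mono_left (nhdsWithin_mono x (fun t ht => ne_of_lt ht))
  refine ge_of_tendsto hf' ?_
  filter_upwards [self_mem_nhdsWithin,
    eventually_nhdsWithin_of_eventually_nhds (eventually_gt_nhds hx)] with t ht ht0
  have h1 : f t - f x ≤ 0 := sub_nonpos.2 (h t ht0.le ht)
  have h2 : t - x < 0 := sub_neg.2 ht
  rw [slope_def_field]
  exact div_nonneg_of_nonpos h1 h2.le

lemma helper_right {f : ℝ → ℝ} {x d : ℝ}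
    (hf : HasDerivAt f d x) (h : ∀ t, x < t → f x ≤ f t) : 0 ≤ d := by
  rw [hasDerivAt_iff_tendsto_slope] at hf
  have hf' : Tendsto (slope f x) (𝓝[>] x) (𝓝 d) :=
    hf.mono_left (nhdsWithin_mono x (fun t ht => ne_of_gt ht))
  refine ge_of_tendsto hf' ?_
  filter_upwards [self_mem_nhdsWithin] with t ht
  have h1 : (0:ℝ) ≤ f t - f x := sub_nonneg.2 (h t ht)
  have h2 : (0:ℝ) < t - x := sub_pos.2 ht
  rw [slope_def_field]
  exact div_nonneg h1 h2.le

/-- Monotone weight, big-O version: if `γ` is positive, `C¹` and non-decreasing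
and the forcing term is `O(γ(t))`, then the solution of the asymptotically
stable pantograph equation is `O(γ(t))` as `t → ∞`. -/
theorem pantograph_bigO_monotone_weight
    (q a b : ℝ)
    (hq0 : 0 < q) (hq1 : q < 1)
    (ha : a ≠ 0) (hb : b < 0) (hab : |a| < |b|)
    (γ φ z : ℝ → ℝ)
    (hγpos : ∀ t ≥ (0 : ℝ), 0 < γ t)
    (hγC1 : ContDiffOn ℝ 1 γ (Set.Ici 0))
    (hγmono : MonotoneOn γ (Set.Ici 0))
    (hφ : ContinuousOn φ (Set.Ici 0))
    (hzc : ContinuousOn z (Set.Ici 0))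
    (hz : ∀ t > 0, HasDerivAt z (a * z (q * t) + b * z t + φ t) t)
    (hφO : ∃ T > (0 : ℝ), ∃ K > (0 : ℝ), ∀ t ≥ T, |φ t| ≤ K * γ t) :
    ∃ T > (0 : ℝ), ∃ K > (0 : ℝ), ∀ t ≥ T, |z t| ≤ K * γ t := by
  obtain ⟨T₀, hT₀, K, hKpos, hφK⟩ := hφO
  have hγ0 : 0 < γ 0 := hγpos 0 le_rfl
  -- bound φ on [0, T₀]
  obtain ⟨B, hB⟩ : ∃ B, ∀ t ∈ Set.Icc (0:ℝ) T₀, |φ t| ≤ B := by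
    obtain ⟨B, hB⟩ := isCompact_Icc.exists_bound_of_continuousOn
      (hφ.mono (fun t ht => ht.1))
    exact ⟨B, fun t ht => by simpa [Real.norm_eq_abs] using hB t ht⟩
  set K' : ℝ := max K (|B| / γ 0) with hK'def
  have hK'pos : 0 < K' := lt_of_lt_of_le hKpos (le_max_left _ _)
  -- global φ bound
  have hφglob : ∀ t ≥ (0:ℝ), |φ t| ≤ K' * γ t := by
    intro t ht
    rcases le_or_gt T₀ t with h | h
    · exact le_trans (hφK t h) (mul_le_mul_of_nonneg_right (le_max_left _ _) (hγpos t ht).le)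
    · have h1 : |φ t| ≤ |B| := le_trans (hB t ⟨ht, h.le⟩) (le_abs_self B)
      have h2 : γ 0 ≤ γ t := hγmono (Set.mem_Ici.mpr le_rfl) ht ht
      have h3 : (0:ℝ) ≤ |B| / γ 0 := div_nonneg (abs_nonneg B) hγ0.le
      calc |φ t| ≤ |B| := h1
        _ = |B| / γ 0 * γ 0 := by field_simp
        _ ≤ |B| / γ 0 * γ t := mul_le_mul_of_nonneg_left h2 h3
        _ ≤ K' * γ t := mul_le_mul_of_nonneg_right (le_max_right _ _) (hγpos t ht).le
  set β : ℝ := |b| - |a| with hβdef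
  have hβ : 0 < β := sub_pos.2 hab
  set K₀ : ℝ := max (|z 0| / γ 0) (K' / β) with hK₀def
  have hK₀pos : 0 < K₀ := lt_of_lt_of_le (div_pos hK'pos hβ) (le_max_right _ _)
  have hγcont : ContinuousOn γ (Set.Ici 0) := hγC1.continuousOn
  -- main claim
  have main : ∀ s ≥ (0:ℝ), |z s| ≤ K₀ * γ s := by
    intro s hs
    have hsub : Set.Icc (0:ℝ) s ⊆ Set.Ici 0 := fun t ht => ht.1
    have hwcont : ContinuousOn (fun t => |z t| / γ t) (Set.Icc 0 s) :=
      ((hzc.mono hsub).abs).div (hγcont.mono hsub) (fun t ht => (hγpos t ht.1).ne')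
    obtain ⟨u, huS, hmax⟩ := isCompact_Icc.exists_isMaxOn ⟨0, le_rfl, hs⟩ hwcont
    set M : ℝ := |z u| / γ u with hMdef
    have hu0 : 0 ≤ u := huS.1
    have hγu : 0 < γ u := hγpos u hu0
    have hM0 : 0 ≤ M := div_nonneg (abs_nonneg _) hγu.le
    have hMbound : ∀ t ∈ Set.Icc (0:ℝ) s, |z t| ≤ M * γ t := by
      intro t ht
      exact (div_le_iff₀ (hγpos t ht.1)).1 (hmax ht)
    have hMK₀ : M ≤ K₀ := by
      rcases eq_or_lt_of_le hu0 with h0 | hupos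
      · rw [hMdef, ← h0]
        exact le_max_left _ _
      -- u > 0 : maximum principle
      · have hMγu : M * γ u = |z u| := div_mul_cancel₀ _ hγu.ne'
        set ε : ℝ := if 0 ≤ z u then 1 else -1 with hεdef
        have hεz : ε * z u = |z u| := by
          rcases le_or_gt 0 (z u) with h | h
          · simp [hεdef, h, abs_of_nonneg h]
          · simp [hεdef, not_le.2 h, abs_of_neg h]
        have hεle : ∀ t, ε * z t ≤ |z t| := by
          intro t
          rcases le_or_gt 0 (z u) with h | h
          · simp only [hεdef, if_pos h, one_mul]; exact le_abs_self _
          · simp only [hεdef, if_neg (not_le.2 h), neg_one_mul]; exact neg_le_abs _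
        -- γ differentiable at u
        have hmem : Set.Ici (0:ℝ) ∈ 𝓝 u := Ici_mem_nhds hupos
        have hγdiff : HasDerivAt γ (deriv γ u) u :=
          ((hγC1.contDiffAt hmem).differentiableAt one_ne_zero).hasDerivAt
        have hγ'0 : 0 ≤ deriv γ u :=
          helper_right hγdiff (fun t ht => hγmono hu0 (hu0.trans ht.le) ht.le)
        have hzu := hz u hupos
        have hζ : HasDerivAt (fun t => ε * z t)
            (ε * (a * z (q * u) + b * z u + φ u)) u := hzu.const_mul ε
        have hfderiv : HasDerivAt (fun t => ε * z t - M * γ t)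
            (ε * (a * z (q * u) + b * z u + φ u) - M * deriv γ u) u :=
          hζ.sub (hγdiff.const_mul M)
        have hfle : ∀ t, 0 ≤ t → t < u →
            ε * z t - M * γ t ≤ ε * z u - M * γ u := by
          intro t ht0 htu
          have h1 : |z t| ≤ M * γ t := hMbound t ⟨ht0, htu.le.trans huS.2⟩
          have h2 : ε * z t ≤ |z t| := hεle t
          rw [hεz, hMγu]
          linarith
        have hD : 0 ≤ ε * (a * z (q * u) + b * z u + φ u) - M * deriv γ u :=
          helper_left hupos hfderiv hfle
        have hD' : 0 ≤ ε * (a * z (q * u) + b * z u + φ u) := by nlinarith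
        -- estimates
        have hqu0 : 0 ≤ q * u := mul_nonneg hq0.le hu0
        have hquu : q * u ≤ u := by nlinarith
        have hzqu : |z (q * u)| ≤ M * γ (q * u) :=
          hMbound (q * u) ⟨hqu0, hquu.trans huS.2⟩
        have hγqu : γ (q * u) ≤ γ u := hγmono hqu0 hu0 hquu
        have hε1 : |ε| = 1 := by
          rcases le_or_gt 0 (z u) with h | h
          · simp [hεdef, h]
          · simp [hεdef, not_le.2 h]
        have hA : a * (ε * z (q * u)) ≤ |a| * (M * γ u) := by
          have : a * (ε * z (q * u)) ≤ |a * (ε * z (q * u))| := le_abs_self _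
          rw [abs_mul, abs_mul, hε1, one_mul] at this
          calc a * (ε * z (q * u)) ≤ |a| * |z (q * u)| := this
            _ ≤ |a| * (M * γ (q * u)) :=
              mul_le_mul_of_nonneg_left hzqu (abs_nonneg a)
            _ ≤ |a| * (M * γ u) := by
              apply mul_le_mul_of_nonneg_left _ (abs_nonneg a)
              exact mul_le_mul_of_nonneg_left hγqu hM0
        have hbterm : b * (ε * z u) = -(|b| * (M * γ u)) := by
          rw [hεz, ← hMγu, abs_of_neg hb]; ring
        have hφu : ε * φ u ≤ K' * γ u := by
          have h1 : ε * φ u ≤ |ε * φ u| := le_abs_self _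
          rw [abs_mul, hε1, one_mul] at h1
          exact h1.trans (hφglob u hu0)
        have hfin : β * M * γ u ≤ K' * γ u := by
          have hexp : ε * (a * z (q * u) + b * z u + φ u)
              = a * (ε * z (q * u)) + b * (ε * z u) + ε * φ u := by ring
          rw [hexp] at hD'
          rw [hβdef]
          nlinarith
        have hβM : β * M ≤ K' := le_of_mul_le_mul_right (by linarith [hfin]) hγu
        have : M ≤ K' / β := (le_div_iff₀ hβ).2 (by linarith [hβM])
        exact this.trans (le_max_right _ _)
    have h1 : |z s| ≤ M * γ s := hMbound s ⟨hs, le_rfl⟩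
    exact h1.trans (mul_le_mul_of_nonneg_right hMK₀ (hγpos s hs).le)
  exact ⟨1, one_pos, K₀, hK₀pos, fun t ht => main t (le_trans zero_le_one ht)⟩
end

section
/- Let q ∈ (0,1), a ≠ 0, b < 0 with |a| < |b|. Let φ : [0,∞) → ℝ be continuous and let z be a solution of the forced pantograph equation z'(t) = a·z(q·t) + b·z(t) + φ(t) for t > 0. Let γ : [0,∞) → (0,∞) be continuously differentiable and non-decreasing with γ(t) → ∞ as t → ∞. If φ(t) = o(γ(t)) as t → ∞, then z(t) = o(γ(t)) as t → ∞. -/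
open Real Filter Set

lemma pant_key (b : ℝ) (hb : b < 0) (z G : ℝ → ℝ)
    (hGc : ContinuousOn G (Set.Ici 0))
    (hz' : ∀ u > 0, HasDerivAt z (b * z u + G u) u)
    (s t C : ℝ) (hs : 0 < s) (hst : s ≤ t)
    (hC : ∀ u ∈ Set.Icc s t, |G u| ≤ C) :
    |z t| ≤ Real.exp (b * (t - s)) * |z s| + C / (-b) := by
  have hC0 : 0 ≤ C := le_trans (abs_nonneg _) (hC s ⟨le_refl _, hst⟩)
  have hicc : Set.Icc s t ⊆ Set.Ici (0:ℝ) := fun u hu => le_of_lt (lt_of_lt_of_le hs hu.1)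
  have hF : ∀ u ∈ Set.Icc s t, HasDerivAt (fun u => Real.exp (-b * u) * z u)
      (Real.exp (-b * u) * G u) u := by
    intro u hu
    have hu0 : 0 < u := lt_of_lt_of_le hs hu.1
    have h1 : HasDerivAt (fun u : ℝ => Real.exp (-b * u)) (Real.exp (-b * u) * (-b * 1)) u :=
      ((hasDerivAt_id u).const_mul (-b)).exp
    have h2 := h1.mul (hz' u hu0)
    refine h2.congr_deriv ?_
    ring
  have hint : IntervalIntegrable (fun u => Real.exp (-b * u) * G u) MeasureTheory.volume s t := by
    apply ContinuousOn.intervalIntegrable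
    apply ContinuousOn.mul
    · exact (Real.continuous_exp.comp (continuous_const.mul continuous_id)).continuousOn
    · exact hGc.mono (by rw [Set.uIcc_of_le hst]; exact hicc)
  have heq := intervalIntegral.integral_eq_sub_of_hasDerivAt
    (fun u hu => hF u (by rwa [Set.uIcc_of_le hst] at hu)) hint
  -- ∫ exp(-bu) du
  have hexpint : (∫ u in s..t, Real.exp (-b * u)) =
      Real.exp (-b * t) / (-b) - Real.exp (-b * s) / (-b) := by
    have hd : ∀ u ∈ Set.uIcc s t, HasDerivAt (fun u : ℝ => Real.exp (-b * u) / (-b))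
        (Real.exp (-b * u)) u := by
      intro u _
      have h1 : HasDerivAt (fun u : ℝ => Real.exp (-b * u)) (Real.exp (-b * u) * (-b * 1)) u :=
        ((hasDerivAt_id u).const_mul (-b)).exp
      have h2 := h1.div_const (-b)
      refine h2.congr_deriv ?_
      rw [mul_div_assoc]
      rw [show (-b * 1) / -b = 1 by rw [mul_one, neg_div_neg_eq]; exact div_self hb.ne]
      rw [mul_one]
    have hi : IntervalIntegrable (fun u : ℝ => Real.exp (-b * u)) MeasureTheory.volume s t :=
      (Real.continuous_exp.comp (continuous_const.mul continuous_id)).intervalIntegrable s t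
    exact intervalIntegral.integral_eq_sub_of_hasDerivAt hd hi
  have habs : |∫ u in s..t, Real.exp (-b * u) * G u| ≤ C * Real.exp (-b * t) / (-b) := by
    have h1 : |∫ u in s..t, Real.exp (-b * u) * G u| ≤ ∫ u in s..t, |Real.exp (-b * u) * G u| :=
      intervalIntegral.abs_integral_le_integral_abs hst
    have h2 : (∫ u in s..t, |Real.exp (-b * u) * G u|) ≤ ∫ u in s..t, Real.exp (-b * u) * C := by
      apply intervalIntegral.integral_mono_on hst hint.abs
      · exact ((Real.continuous_exp.comp (continuous_const.mul continuous_id)).mul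
          continuous_const).intervalIntegrable s t
      · intro u hu
        rw [abs_mul, abs_of_pos (Real.exp_pos _)]
        exact mul_le_mul_of_nonneg_left (hC u hu) (le_of_lt (Real.exp_pos _))
    have h3 : (∫ u in s..t, Real.exp (-b * u) * C) =
        C * (Real.exp (-b * t) / (-b) - Real.exp (-b * s) / (-b)) := by
      rw [intervalIntegral.integral_mul_const, hexpint]; ring
    have h4 : C * (Real.exp (-b * t) / (-b) - Real.exp (-b * s) / (-b)) ≤
        C * Real.exp (-b * t) / (-b) := by
      have hb' : 0 < -b := by linarith
      have : 0 ≤ C * (Real.exp (-b * s) / (-b)) :=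
        mul_nonneg hC0 (div_nonneg (le_of_lt (Real.exp_pos _)) (le_of_lt hb'))
      have heq2 : C * Real.exp (-b * t) / (-b) = C * (Real.exp (-b * t) / (-b)) := by ring
      rw [mul_sub, heq2]
      linarith
    linarith
  -- combine
  have hmain : Real.exp (-b * t) * |z t| ≤ Real.exp (-b * s) * |z s| + C * Real.exp (-b * t) / (-b) := by
    have : Real.exp (-b * t) * z t = Real.exp (-b * s) * z s + ∫ u in s..t, Real.exp (-b * u) * G u := by
      rw [heq]; ring
    calc Real.exp (-b * t) * |z t| = |Real.exp (-b * t) * z t| := by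
          rw [abs_mul, abs_of_pos (Real.exp_pos _)]
      _ ≤ |Real.exp (-b * s) * z s| + |∫ u in s..t, Real.exp (-b * u) * G u| := by
          rw [this]; exact abs_add_le _ _
      _ ≤ Real.exp (-b * s) * |z s| + C * Real.exp (-b * t) / (-b) := by
          rw [abs_mul, abs_of_pos (Real.exp_pos _)]
          linarith
  -- multiply by exp (b t)
  have hpos : 0 < Real.exp (b * t) := Real.exp_pos _
  have := mul_le_mul_of_nonneg_left hmain (le_of_lt hpos)
  have e1 : Real.exp (b * t) * (Real.exp (-b * t) * |z t|) = |z t| := by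
    rw [← mul_assoc, ← Real.exp_add]
    simp
  have e2 : Real.exp (b * t) * (Real.exp (-b * s) * |z s| + C * Real.exp (-b * t) / (-b)) =
      Real.exp (b * (t - s)) * |z s| + C / (-b) := by
    rw [mul_add]
    congr 1
    · rw [← mul_assoc, ← Real.exp_add]; ring_nf
    · have h : Real.exp (b*t) * Real.exp (-b*t) = 1 := by rw [← Real.exp_add]; simp
      calc Real.exp (b*t) * (C * Real.exp (-b*t) / (-b))
          = (Real.exp (b*t) * Real.exp (-b*t)) * C / (-b) := by ring
        _ = C / (-b) := by rw [h, one_mul]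
  rw [e1, e2] at this
  exact this

set_option maxHeartbeats 1000000 in
/-- Monotone weight, little-o version: if `γ` is positive, `C¹`, non-decreasing
and tends to infinity, and the forcing term is `o(γ(t))`, then the solution of
the asymptotically stable pantograph equation is `o(γ(t))` as `t → ∞`. -/
theorem pantograph_littleo_monotone_weight
    (q a b : ℝ)
    (hq0 : 0 < q) (hq1 : q < 1)
    (ha : a ≠ 0) (hb : b < 0) (hab : |a| < |b|)
    (γ φ z : ℝ → ℝ)
    (hγpos : ∀ t ≥ (0 : ℝ), 0 < γ t)
    (hγC1 : ContDiffOn ℝ 1 γ (Set.Ici 0))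
    (hγmono : MonotoneOn γ (Set.Ici 0))
    (hγinf : Tendsto γ atTop atTop)
    (hφ : ContinuousOn φ (Set.Ici 0))
    (hzc : ContinuousOn z (Set.Ici 0))
    (hz : ∀ t > 0, HasDerivAt z (a * z (q * t) + b * z t + φ t) t)
    (hφo : Tendsto (fun t => φ t / γ t) atTop (nhds 0)) :
    Tendsto (fun t => z t / γ t) atTop (nhds 0) := by
  have hb' : 0 < -b := by linarith
  have hbne : b ≠ 0 := hb.ne
  set θ := |a| / (-b) with hθdef
  have hbne : b ≠ 0 := hb.ne
  have hθ0 : 0 ≤ θ := div_nonneg (abs_nonneg _) hb'.le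
  have hθ1 : θ < 1 := by
    rw [hθdef, div_lt_one hb']
    rwa [abs_of_neg hb] at hab
  have hγc : ContinuousOn γ (Set.Ici 0) := hγC1.continuousOn
  set G := fun u => a * z (q * u) + φ u with hGdef
  have hGc : ContinuousOn G (Set.Ici 0) := by
    apply ContinuousOn.add
    · exact continuousOn_const.mul (hzc.comp (continuous_const.mul continuous_id).continuousOn
        (fun u hu => Set.mem_Ici.2 (mul_nonneg hq0.le (Set.mem_Ici.1 hu))))
    · exact hφ
  have hz' : ∀ u > 0, HasDerivAt z (b * z u + G u) u := by
    intro u hu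
    have h := hz u hu
    convert h using 1
    simp only [hGdef]
    ring
  -- helper continuity
  have hcontdiv : ∀ (f : ℝ → ℝ), ContinuousOn f (Set.Ici 0) → ∀ T : ℝ,
      ContinuousOn (fun u => |f u| / γ u) (Set.Icc 0 T) := by
    intro f hf T
    apply ContinuousOn.div ((hf.mono Set.Icc_subset_Ici_self).abs)
      (hγc.mono Set.Icc_subset_Ici_self)
    intro u hu
    exact (hγpos u hu.1).ne'
  -- bound on φ
  obtain ⟨Cφ, hCφ0, hCφ⟩ : ∃ C, 0 ≤ C ∧ ∀ t ≥ (0:ℝ), |φ t| ≤ C * γ t := by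
    obtain ⟨Tφ1, hTφ1⟩ := Metric.tendsto_atTop.1 hφo 1 one_pos
    set Tφ := max Tφ1 0 with hTφ
    obtain ⟨u₂, hu₂, hmax₂'⟩ := isCompact_Icc.exists_isMaxOn
      (Set.nonempty_Icc.2 (le_max_right Tφ1 0)) (hcontdiv φ hφ Tφ)
    have hmax₂ : ∀ y ∈ Set.Icc (0:ℝ) Tφ, |φ y| / γ y ≤ |φ u₂| / γ u₂ := fun y hy => hmax₂' hy
    refine ⟨max (|φ u₂| / γ u₂) 1, le_trans zero_le_one (le_max_right _ _), ?_⟩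
    intro t ht
    have hγt := hγpos t ht
    rw [← div_le_iff₀ hγt]
    rcases le_or_gt t Tφ with h | h
    · exact le_trans (hmax₂ t ⟨ht, h⟩) (le_max_left _ _)
    · have h1 := hTφ1 t (le_trans (le_max_left _ _) h.le)
      rw [Real.dist_eq, sub_zero, abs_div, abs_of_pos hγt] at h1
      exact le_trans h1.le (le_max_right _ _)
  -- C₁ : bound on [0,1]
  obtain ⟨u₁, hu₁, hmax₁'⟩ := isCompact_Icc.exists_isMaxOn
    (Set.nonempty_Icc.2 zero_le_one) (hcontdiv z hzc 1)
  have hmax₁ : ∀ y ∈ Set.Icc (0:ℝ) 1, |z y| / γ y ≤ |z u₁| / γ u₁ := fun y hy => hmax₁' hy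
  set C₁ := |z u₁| / γ u₁ with hC₁def
  have hC₁0 : 0 ≤ C₁ := div_nonneg (abs_nonneg _) (hγpos u₁ hu₁.1).le
  -- a priori bound
  set A := |z 1| / γ 1 + Cφ / (-b) with hA
  set K₀ := max C₁ (A / (1 - θ)) with hK₀
  have hK₀0 : 0 ≤ K₀ := le_trans hC₁0 (le_max_left _ _)
  have hKbound : ∀ t ≥ (0:ℝ), |z t| ≤ K₀ * γ t := by
    intro t ht
    set T := max t 1 with hTdef
    have hT0 : (0:ℝ) ≤ T := le_trans zero_le_one (le_max_right _ _)
    obtain ⟨v, hv, hmaxv'⟩ := isCompact_Icc.exists_isMaxOn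
      (Set.nonempty_Icc.2 hT0) (hcontdiv z hzc T)
    have hmaxv : ∀ y ∈ Set.Icc (0:ℝ) T, |z y| / γ y ≤ |z v| / γ v := fun y hy => hmaxv' hy
    set M := |z v| / γ v with hM
    have hM0 : 0 ≤ M := div_nonneg (abs_nonneg _) (hγpos v hv.1).le
    have hft : |z t| / γ t ≤ M := hmaxv t ⟨ht, le_max_left _ _⟩
    have hγvpos := hγpos v hv.1
    have hMK : M ≤ K₀ := by
      rcases le_or_gt v 1 with hv1 | hv1
      · exact le_trans (hmax₁ v ⟨hv.1, hv1⟩) (le_max_left _ _)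
      · have hCgoal : ∀ u ∈ Set.Icc (1:ℝ) v, |G u| ≤ (|a| * M + Cφ) * γ v := by
          intro u hu
          have hu0 : (0:ℝ) ≤ u := le_trans zero_le_one hu.1
          have hquu : q * u ≤ u := mul_le_of_le_one_left hu0 hq1.le
          have hqu : q * u ∈ Set.Icc (0:ℝ) T :=
            ⟨mul_nonneg hq0.le hu0, le_trans hquu (le_trans hu.2 hv.2)⟩
          have h1 : |z (q*u)| ≤ M * γ (q*u) := by
            have h := hmaxv (q*u) hqu
            rwa [div_le_iff₀ (hγpos _ hqu.1)] at h
          have h2 : γ (q*u) ≤ γ v := hγmono hqu.1 hv.1 (le_trans hquu hu.2)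
          have h3 : |φ u| ≤ Cφ * γ u := hCφ u hu0
          have h4 : γ u ≤ γ v := hγmono hu0 hv.1 hu.2
          have h5 : |a| * |z (q*u)| ≤ |a| * M * γ v := by
            calc |a| * |z (q*u)| ≤ |a| * (M * γ (q*u)) :=
                  mul_le_mul_of_nonneg_left h1 (abs_nonneg a)
              _ ≤ |a| * (M * γ v) := by
                  exact mul_le_mul_of_nonneg_left
                    (mul_le_mul_of_nonneg_left h2 hM0) (abs_nonneg a)
              _ = |a| * M * γ v := by ring
          have h6 : |φ u| ≤ Cφ * γ v :=
            le_trans h3 (mul_le_mul_of_nonneg_left h4 hCφ0)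
          calc |G u| ≤ |a| * |z (q*u)| + |φ u| := by
                simp only [hGdef]
                exact le_trans (abs_add_le _ _) (by rw [abs_mul])
            _ ≤ (|a| * M + Cφ) * γ v := by linarith
        have hkey := pant_key b hb z G hGc hz' 1 v ((|a| * M + Cφ) * γ v) one_pos hv1.le hCgoal
        have hexp1 : Real.exp (b * (v - 1)) ≤ 1 :=
          Real.exp_le_one_iff.2 (by nlinarith)
        have hstep : |z v| ≤ |z 1| + (|a| * M + Cφ) * γ v / (-b) := by
          have h7 := mul_le_mul_of_nonneg_right hexp1 (abs_nonneg (z 1))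
          rw [one_mul] at h7
          linarith
        have hγv1 : γ 1 ≤ γ v := hγmono (Set.mem_Ici.2 zero_le_one) hv.1 hv1.le
        have h8 : |z 1| ≤ (|z 1| / γ 1) * γ v := by
          rw [div_mul_eq_mul_div, le_div_iff₀ (hγpos 1 zero_le_one)]
          exact mul_le_mul_of_nonneg_left hγv1 (abs_nonneg _)
        have h9 : (|a| * M + Cφ) * γ v / (-b) = (θ * M + Cφ / (-b)) * γ v := by
          rw [hθdef]
          field_simp
          ring
        have hM2 : M * γ v ≤ (A + θ * M) * γ v := by
          have e : |z v| = M * γ v := (div_mul_cancel₀ _ hγvpos.ne').symm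
          rw [← e]
          calc |z v| ≤ |z 1| + (|a| * M + Cφ) * γ v / (-b) := hstep
            _ ≤ (|z 1| / γ 1) * γ v + (θ * M + Cφ / (-b)) * γ v := by
                rw [h9] at hstep ⊢
                linarith
            _ = (A + θ * M) * γ v := by rw [hA]; ring
        have hM3 : M ≤ A + θ * M := le_of_mul_le_mul_right hM2 hγvpos
        have hM4 : M ≤ A / (1 - θ) := by
          rw [le_div_iff₀ (by linarith : (0:ℝ) < 1 - θ)]
          nlinarith
        exact le_trans hM4 (le_max_right _ _)
    have h := le_trans hft hMK
    rwa [div_le_iff₀ (hγpos t ht)] at h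
  -- improvement step
  have improve : ∀ ε > (0:ℝ), ∀ K, 0 ≤ K → (∃ T, 0 ≤ T ∧ ∀ t ≥ T, |z t| ≤ K * γ t) →
      ∃ T, 0 ≤ T ∧ ∀ t ≥ T, |z t| ≤ (θ * K + (1 + 1/(-b)) * ε) * γ t := by
    intro ε hε K hKnn hex
    obtain ⟨T, hT0, hT⟩ := hex
    obtain ⟨Tε', hTε'⟩ := Metric.tendsto_atTop.1 hφo ε hε
    set Tε := max Tε' 0 with hTεdef
    have hTεprop : ∀ t ≥ Tε, |φ t| ≤ ε * γ t := by
      intro t ht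
      have ht0 : (0:ℝ) ≤ t := le_trans (le_max_right _ _) ht
      have h := hTε' t (le_trans (le_max_left _ _) ht)
      rw [Real.dist_eq, sub_zero, abs_div, abs_of_pos (hγpos t ht0),
        div_lt_iff₀ (hγpos t ht0)] at h
      exact h.le
    set m := max 1 (max T Tε) with hm
    have hm0 : (0:ℝ) ≤ m := le_trans zero_le_one (le_max_left _ _)
    set s := m / q with hs
    have hsm : m ≤ s := by
      rw [hs, le_div_iff₀ hq0]
      nlinarith
    have hs0 : (0:ℝ) < s := lt_of_lt_of_le one_pos (le_trans (le_max_left _ _) hsm)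
    have hkeyall : ∀ t ≥ s, |z t| ≤ Real.exp (b * (t - s)) * |z s| + (|a| * K + ε) * γ t / (-b) := by
      intro t hts
      have ht0 : (0:ℝ) ≤ t := le_trans hs0.le hts
      apply pant_key b hb z G hGc hz' s t _ hs0 hts
      intro u hu
      have hu0 : (0:ℝ) ≤ u := le_trans hs0.le hu.1
      have hqu0 : (0:ℝ) ≤ q * u := mul_nonneg hq0.le hu0
      have hquu : q * u ≤ u := mul_le_of_le_one_left hu0 hq1.le
      have hquT : T ≤ q * u := by
        have hqs : q * s = m := by rw [hs, mul_div_cancel₀ _ hq0.ne']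
        have h := mul_le_mul_of_nonneg_left hu.1 hq0.le
        rw [hqs] at h
        exact le_trans (le_trans (le_max_left T Tε) (le_max_right 1 _)) h
      have h1 : |z (q*u)| ≤ K * γ (q*u) := hT _ hquT
      have h2 : γ (q*u) ≤ γ t := hγmono hqu0 ht0 (le_trans hquu hu.2)
      have h3 : |φ u| ≤ ε * γ u := hTεprop u
        (le_trans (le_trans (le_trans (le_max_right T Tε) (le_max_right 1 _)) hsm) hu.1)
      have h4 : γ u ≤ γ t := hγmono hu0 ht0 hu.2
      have h5 : |a| * |z (q*u)| ≤ |a| * K * γ t := by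
        calc |a| * |z (q*u)| ≤ |a| * (K * γ (q*u)) :=
              mul_le_mul_of_nonneg_left h1 (abs_nonneg a)
          _ ≤ |a| * (K * γ t) :=
              mul_le_mul_of_nonneg_left (mul_le_mul_of_nonneg_left h2 hKnn) (abs_nonneg a)
          _ = |a| * K * γ t := by ring
      have h6 : |φ u| ≤ ε * γ t :=
        le_trans h3 (mul_le_mul_of_nonneg_left h4 hε.le)
      calc |G u| ≤ |a| * |z (q*u)| + |φ u| := by
            simp only [hGdef]
            exact le_trans (abs_add_le _ _) (by rw [abs_mul])
        _ ≤ (|a| * K + ε) * γ t := by linarith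
    have hγs : 0 < γ s := hγpos s hs0.le
    have hdecay : Tendsto (fun t => Real.exp (b * (t - s)) * |z s|) atTop (nhds 0) := by
      have h0 : Tendsto (fun t : ℝ => t - s) atTop atTop := by
        simpa [sub_eq_add_neg] using tendsto_atTop_add_const_right atTop (-s) tendsto_id
      have h1 : Tendsto (fun t : ℝ => b * (t - s)) atTop atBot :=
        (tendsto_const_mul_atBot_of_neg hb).2 h0
      have h2 := Real.tendsto_exp_atBot.comp h1
      simpa using h2.mul_const |z s|
    have hev : ∀ᶠ t in atTop, Real.exp (b * (t - s)) * |z s| < ε * γ s :=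
      hdecay.eventually_lt_const (by positivity)
    obtain ⟨T2, hT2⟩ := eventually_atTop.1 hev
    refine ⟨max T2 s, le_trans hs0.le (le_max_right _ _), ?_⟩
    intro t ht
    have hts : s ≤ t := le_trans (le_max_right _ _) ht
    have ht0 : (0:ℝ) ≤ t := le_trans hs0.le hts
    have hlt := hT2 t (le_trans (le_max_left _ _) ht)
    have hγst : γ s ≤ γ t := hγmono hs0.le ht0 hts
    have hkt := hkeyall t hts
    have htheta : (|a| * K + ε) * γ t / (-b) = (θ * K + ε / (-b)) * γ t := by
      rw [hθdef]
      field_simp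
      ring
    have hεst : ε * γ s ≤ ε * γ t := mul_le_mul_of_nonneg_left hγst hε.le
    calc |z t| ≤ Real.exp (b * (t - s)) * |z s| + (|a| * K + ε) * γ t / (-b) := hkt
      _ ≤ ε * γ t + (θ * K + ε / (-b)) * γ t := by
          rw [htheta] at hkt ⊢
          linarith
      _ = (θ * K + (1 + 1/(-b)) * ε) * γ t := by ring
  -- conclusion
  rw [Metric.tendsto_atTop]
  intro ε hε
  have hε2 : (0:ℝ) < ε / 2 := half_pos hε
  have hc : (0:ℝ) < 1 + 1/(-b) := by positivity
  set δ := ε / 2 * (1 - θ) / (1 + 1/(-b)) with hδ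
  have hδ0 : 0 < δ := div_pos (mul_pos hε2 (by linarith)) hc
  have hind : ∀ n : ℕ, ∃ T, 0 ≤ T ∧ ∀ t ≥ T, |z t| ≤ (θ^n * K₀ + ε/2) * γ t := by
    intro n
    induction n with
    | zero =>
      refine ⟨0, le_refl _, fun t ht => ?_⟩
      have := hKbound t ht
      have hγt := (hγpos t ht).le
      rw [pow_zero]
      nlinarith
    | succ n ih =>
      obtain ⟨T, hT0, hT⟩ := ih
      have hKn : (0:ℝ) ≤ θ^n * K₀ + ε/2 := by positivity
      obtain ⟨T', hT'0, hT'⟩ := improve δ hδ0 (θ^n * K₀ + ε/2) hKn ⟨T, hT0, hT⟩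
      refine ⟨T', hT'0, fun t ht => ?_⟩
      have h := hT' t ht
      have heq : θ * (θ^n * K₀ + ε/2) + (1 + 1/(-b)) * δ = θ^(n+1) * K₀ + ε/2 := by
        rw [hδ, mul_div_assoc', mul_div_cancel_left₀ _ hc.ne']
        ring
      rwa [heq] at h
  have hpow : Tendsto (fun n : ℕ => θ^n * K₀) atTop (nhds 0) := by
    simpa using (tendsto_pow_atTop_nhds_zero_of_lt_one hθ0 hθ1).mul_const K₀
  obtain ⟨n, hn⟩ := (hpow.eventually_lt_const hε2).exists
  obtain ⟨T, hT0, hT⟩ := hind n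
  refine ⟨max T 0, fun t ht => ?_⟩
  have ht0 : (0:ℝ) ≤ t := le_trans (le_max_right _ _) ht
  have hγt := hγpos t ht0
  rw [Real.dist_eq, sub_zero, abs_div, abs_of_pos hγt, div_lt_iff₀ hγt]
  have h1 := hT t (le_trans (le_max_left _ _) ht)
  have h2 : θ^n * K₀ + ε/2 < ε := by linarith
  calc |z t| ≤ (θ^n * K₀ + ε/2) * γ t := h1
    _ < ε * γ t := mul_lt_mul_of_pos_right h2 hγt
end

section
/- Let q ∈ (0,1), a ≠ 0, b < 0 with |a| < |b|. Let f : [0,∞) → ℝ be continuous, let x be a solution of x'(t) = a·x(q·t) + b·x(t) + f(t) for t > 0 with x(0) = ζ ∈ ℝ, and let y(t) := ∫₀ᵗ e^{-(t-s)} f(s) ds. Then the following three statements are equivalent: (A) y(t) → 0 as t → ∞; (B) for every θ > 0, ∫ₜ^{t+θ} f(s) ds → 0 as t → ∞; (C) x(t) → 0 as t → ∞. -/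
open Real Filter Set MeasureTheory intervalIntegral

lemma aux_exp_deriv (c s : ℝ) : HasDerivAt (fun u => Real.exp (c*u)) (c * Real.exp (c*s)) s := by
  simpa [mul_comm] using ((hasDerivAt_id s).const_mul c).exp

lemma aux_exp_int {c : ℝ} (hc : c ≠ 0) (T t : ℝ) :
    ∫ s in T..t, Real.exp (c*s) = (Real.exp (c*t) - Real.exp (c*T))/c := by
  have h : ∀ s : ℝ, HasDerivAt (fun s => Real.exp (c*s)/c) (Real.exp (c*s)) s := by
    intro s
    simpa [mul_div_assoc, mul_div_cancel_left₀ _ hc] using (aux_exp_deriv c s).div_const c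
  rw [integral_eq_sub_of_hasDerivAt (fun s _ => h s)
    ((Real.continuous_exp.comp (continuous_const.mul continuous_id)).intervalIntegrable T t)]
  ring

/-- key bound for exponentially weighted integrals -/
lemma aux_weighted_bound {c m T t : ℝ} (hc : c < 0) (hT : T ≤ t) (hm : 0 ≤ m)
    {h : ℝ → ℝ} (hh : Continuous h) (hbd : ∀ s, T ≤ s → s ≤ t → |h s| ≤ m) :
    |Real.exp (c*t) * ∫ s in T..t, Real.exp (-(c*s)) * h s| ≤ m / (-c) := by
  have hc' : c ≠ 0 := ne_of_lt hc
  have h1 : |∫ s in T..t, Real.exp (-(c*s)) * h s| ≤ ∫ s in T..t, Real.exp (-(c*s)) * m := by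
    refine (intervalIntegral.abs_integral_le_integral_abs hT).trans ?_
    apply intervalIntegral.integral_mono_on hT
    · exact ((Real.continuous_exp.comp (continuous_const.mul continuous_id).neg).mul hh).abs.intervalIntegrable T t
    · exact ((Real.continuous_exp.comp (continuous_const.mul continuous_id).neg).mul continuous_const).intervalIntegrable T t
    · intro s hs
      rw [abs_mul, abs_of_pos (Real.exp_pos _)]
      exact mul_le_mul_of_nonneg_left (hbd s hs.1 hs.2) (Real.exp_pos _).le
  have h2 : ∫ s in T..t, Real.exp (-(c*s)) * m = m * ((Real.exp (-c*t) - Real.exp (-c*T))/(-c)) := by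
    rw [← aux_exp_int (neg_ne_zero.mpr hc') T t, ← intervalIntegral.integral_const_mul]
    congr 1; ext s; ring_nf
  have hend : Real.exp (c*t) * (m * ((Real.exp (-c*t) - Real.exp (-c*T))/(-c)))
      = m * (1 - Real.exp (c*(t-T)))/(-c) := by
    have e1 : Real.exp (-c*t) * Real.exp (c*t) = 1 := by
      rw [← Real.exp_add]; simp
    have e2 : Real.exp (-c*T) * Real.exp (c*t) = Real.exp (c*(t-T)) := by
      rw [← Real.exp_add]; ring_nf
    rw [mul_comm (Real.exp (c*t)), mul_assoc, div_mul_eq_mul_div, sub_mul, e1, e2, mul_div_assoc]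
  rw [abs_mul, abs_of_pos (Real.exp_pos _)]
  calc Real.exp (c*t) * |∫ s in T..t, Real.exp (-(c*s)) * h s|
      ≤ Real.exp (c*t) * (m * ((Real.exp (-c*t) - Real.exp (-c*T))/(-c))) :=
        mul_le_mul_of_nonneg_left (h1.trans_eq h2) (Real.exp_pos _).le
    _ = m * (1 - Real.exp (c*(t-T)))/(-c) := hend
    _ ≤ m / (-c) := by
        apply div_le_div_of_nonneg_right ?_ (by linarith)
        nlinarith [Real.exp_pos (c*(t-T))]

/-- a continuous function tending to 0 at infinity is bounded on [0,∞) -/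
lemma aux_bounded_of_tendsto {h : ℝ → ℝ} (hh : Continuous h)
    (hlim : Tendsto h atTop (nhds 0)) : ∃ H, 0 ≤ H ∧ ∀ t, 0 ≤ t → |h t| ≤ H := by
  obtain ⟨T, hT⟩ := (Metric.tendsto_atTop.mp hlim 1 one_pos)
  obtain ⟨C, hC⟩ := (isCompact_Icc (a := (0:ℝ)) (b := max T 0)).exists_bound_of_continuousOn
    hh.continuousOn
  refine ⟨max C 1, le_trans zero_le_one (le_max_right _ _), fun t ht => ?_⟩
  rcases le_total t (max T 0) with h1 | h1
  · exact le_trans (by simpa using hC t ⟨ht, h1⟩) (le_max_left _ _)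
  · have := hT t (le_trans (le_max_left T 0) h1)
    rw [Real.dist_eq, sub_zero] at this
    exact le_trans this.le (le_max_right _ _)



lemma aux_exp_tendsto {c : ℝ} (hc : c < 0) :
    Tendsto (fun u => Real.exp (c*u)) atTop (nhds 0) := by
  have : Tendsto (fun u : ℝ => c*u) atTop atBot := by
    exact tendsto_id.const_mul_atTop_of_neg hc
  exact Real.tendsto_exp_atBot.comp this

/-- convolution with decaying exponential of a vanishing function vanishes -/
lemma aux_conv_tendsto {c : ℝ} (hc : c < 0) {h : ℝ → ℝ} (hh : Continuous h)
    {H : ℝ} (hbd : ∀ t, 0 ≤ t → |h t| ≤ H)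
    (hlim : Tendsto h atTop (nhds 0)) :
    Tendsto (fun t => Real.exp (c*t) * ∫ s in (0:ℝ)..t, Real.exp (-(c*s)) * h s)
      atTop (nhds 0) := by
  have hH : 0 ≤ H := le_trans (abs_nonneg _) (hbd 0 le_rfl)
  rw [Metric.tendsto_atTop]
  intro ε hε
  have hc3 : 0 < -c := by linarith
  set ε' := ε * (-c) / 3 with hε'def
  have hε' : 0 < ε' := by positivity
  obtain ⟨T₀, hT₀⟩ := Metric.tendsto_atTop.mp hlim ε' hε'
  set T := max T₀ 0 with hTdef
  have hT0 : 0 ≤ T := le_max_right _ _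
  -- choose u₀ with exp(c*u₀) * (H/(-c)) ≤ ε/3
  have : ∀ᶠ u in atTop, Real.exp (c*u) * (H/(-c)) < ε/3 := by
    have := (aux_exp_tendsto hc).mul_const (H/(-c))
    rw [zero_mul] at this
    exact (this.eventually (eventually_lt_nhds (by positivity : (0:ℝ) < ε/3))).mono
      (fun u hu => by simpa using hu)
  obtain ⟨u₀, hu₀⟩ := this.exists_forall_of_atTop
  refine ⟨max (T + u₀) T, fun t ht => ?_⟩
  have htT : T ≤ t := le_trans (le_max_right _ _) ht
  have hsplit : (∫ s in (0:ℝ)..t, Real.exp (-(c*s)) * h s)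
      = (∫ s in (0:ℝ)..T, Real.exp (-(c*s)) * h s) + ∫ s in T..t, Real.exp (-(c*s)) * h s := by
    rw [integral_add_adjacent_intervals] <;>
      exact ((Real.continuous_exp.comp (continuous_const.mul continuous_id).neg).mul hh).intervalIntegrable _ _
  rw [Real.dist_eq, sub_zero, hsplit, mul_add]
  have hpart2 : |Real.exp (c*t) * ∫ s in T..t, Real.exp (-(c*s)) * h s| ≤ ε' / (-c) := by
    refine aux_weighted_bound hc htT hε'.le hh (fun s hs _ => ?_)
    exact (hT₀ s (le_trans (le_max_left _ _) hs)).le.trans_eq' (by rw [Real.dist_eq, sub_zero])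
  have hpart1 : |Real.exp (c*t) * ∫ s in (0:ℝ)..T, Real.exp (-(c*s)) * h s| < ε/3 := by
    have hbase : |Real.exp (c*T) * ∫ s in (0:ℝ)..T, Real.exp (-(c*s)) * h s| ≤ H / (-c) :=
      aux_weighted_bound hc hT0 hH hh (fun s hs _ => hbd s hs)
    have hfact : Real.exp (c*t) = Real.exp (c*(t-T)) * Real.exp (c*T) := by
      rw [← Real.exp_add]; ring_nf
    rw [hfact, mul_assoc, abs_mul, abs_of_pos (Real.exp_pos _)]
    calc Real.exp (c*(t-T)) * |Real.exp (c*T) * ∫ s in (0:ℝ)..T, Real.exp (-(c*s)) * h s|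
        ≤ Real.exp (c*(t-T)) * (H/(-c)) :=
          mul_le_mul_of_nonneg_left hbase (Real.exp_pos _).le
      _ < ε/3 := hu₀ (t - T) (by have := le_trans (le_max_left (T+u₀) T) ht; linarith)
  refine lt_of_le_of_lt (abs_add_le _ _) ?_
  have hcne : c ≠ 0 := hc.ne
  have heq : ε'/(-c) = ε/3 := by rw [hε'def]; field_simp
  linarith

/-- window integrals as primitive differences -/
lemma aux_window {f : ℝ → ℝ} (hf : Continuous f) (t θ : ℝ) :
    (∫ s in (0:ℝ)..(t+θ), f s) - ∫ s in (0:ℝ)..t, f s = ∫ s in t..(t+θ), f s := by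
  rw [← integral_add_adjacent_intervals (hf.intervalIntegrable 0 t) (hf.intervalIntegrable t (t+θ))]
  ring

lemma aux_primitive_cont {f : ℝ → ℝ} (hf : Continuous f) :
    Continuous (fun t => ∫ s in (0:ℝ)..t, f s) :=
  continuous_iff_continuousAt.mpr fun t => ((hf.integral_hasStrictDerivAt 0 t).hasDerivAt).continuousAt

/-- Baire category step: uniform linear bound on window integrals -/
lemma aux_baire_bound {f : ℝ → ℝ} (hf : Continuous f)
    (hB : ∀ θ > (0:ℝ), Tendsto (fun t => ∫ s in t..(t + θ), f s) atTop (nhds 0)) :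
    ∃ C > (0:ℝ), ∀ t u : ℝ, 0 ≤ t → 0 ≤ u →
      |(∫ s in (0:ℝ)..(t+u), f s) - ∫ s in (0:ℝ)..t, f s| ≤ C * (1+u) := by
  set F : ℝ → ℝ := fun t => ∫ s in (0:ℝ)..t, f s with hFdef
  have hFc : Continuous F := aux_primitive_cont hf
  -- the closed sets
  set E : ℕ → Set ℝ := fun N => {θ | ∀ t, 0 ≤ t → |F (t+|θ|) - F t| ≤ N} with hEdef
  have hEclosed : ∀ N, IsClosed (E N) := by
    intro N
    have : E N = ⋂ (t : ℝ) (_ : 0 ≤ t), (fun θ => |F (t+|θ|) - F t|) ⁻¹' Iic (N:ℝ) := by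
      ext θ; simp [hEdef]
    rw [this]
    refine isClosed_iInter fun t => isClosed_iInter fun ht => IsClosed.preimage ?_ isClosed_Iic
    exact ((hFc.comp (continuous_const.add continuous_abs)).sub continuous_const).abs
  have hEunion : (⋃ N, E N) = univ := by
    refine eq_univ_of_forall fun θ => mem_iUnion.mpr ?_
    rcases eq_or_ne θ 0 with h0 | h0
    · exact ⟨0, fun t ht => by simp [h0]⟩
    · have hpos : 0 < |θ| := abs_pos.mpr h0
      have htend : Tendsto (fun t => F (t+|θ|) - F t) atTop (nhds 0) :=
        (hB |θ| hpos).congr (fun t => (aux_window hf t |θ|).symm)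
      obtain ⟨T, hT⟩ := Metric.tendsto_atTop.mp htend 1 one_pos
      obtain ⟨C₀, hC₀⟩ := (isCompact_Icc (a := (0:ℝ)) (b := max T 0)).exists_bound_of_continuousOn
        (((hFc.comp (continuous_id.add continuous_const)).sub hFc).continuousOn)
      refine ⟨⌈max C₀ 1⌉₊, fun t ht => ?_⟩
      rcases le_total t (max T 0) with h1 | h1
      · refine le_trans (by simpa using hC₀ t ⟨ht, h1⟩) ?_
        exact le_trans (le_max_left _ _) (Nat.le_ceil _)
      · have := hT t (le_trans (le_max_left T 0) h1)
        rw [Real.dist_eq, sub_zero] at this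
        exact this.le.trans (le_trans (le_max_right _ _) (Nat.le_ceil _))
  obtain ⟨N, hN⟩ := nonempty_interior_of_iUnion_of_closed hEclosed hEunion
  obtain ⟨θ₀, hθ₀⟩ := hN
  obtain ⟨ε, hε, hball⟩ := Metric.mem_nhds_iff.mp (mem_interior_iff_mem_nhds.mp hθ₀)
  set α := |θ₀| with hαdef
  set δ := ε/2 with hδdef
  have hδ : 0 < δ := by positivity
  have hδε : δ < ε := by rw [hδdef]; linarith
  -- key : r ∈ [α, α+δ] windows bounded by N
  have key : ∀ r, α ≤ r → r ≤ α + δ → ∀ t, 0 ≤ t → |F (t+r) - F t| ≤ N := by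
    intro r hr1 hr2 t ht
    have hr0 : 0 ≤ r := le_trans (abs_nonneg _) hr1
    rcases le_or_gt 0 θ₀ with hs | hs
    · have hmem : r ∈ E N := hball (by
        rw [Metric.mem_ball, Real.dist_eq]
        rw [hαdef, abs_of_nonneg hs] at hr1 hr2
        rw [abs_sub_lt_iff]; constructor <;> linarith)
      simpa [abs_of_nonneg hr0] using hmem t ht
    · have hmem : (-r) ∈ E N := hball (by
        rw [Metric.mem_ball, Real.dist_eq]
        rw [hαdef, abs_of_neg hs] at hr1 hr2
        rw [abs_sub_lt_iff]; constructor <;> linarith)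
      simpa [abs_of_nonneg hr0] using hmem t ht
  -- small windows bounded by 2N
  have small : ∀ s, 0 ≤ s → s ≤ δ → ∀ t, 0 ≤ t → |F (t+s) - F t| ≤ 2*N := by
    intro s hs1 hs2 t ht
    have h1 : |F (t+(α+s)) - F t| ≤ N := key (α+s) (by linarith) (by linarith) t ht
    have h2 : |F ((t+s)+α) - F (t+s)| ≤ N := key α le_rfl (by linarith) (t+s) (by linarith)
    have he : t+(α+s) = (t+s)+α := by ring
    rw [he] at h1
    calc |F (t+s) - F t| = |(F ((t+s)+α) - F t) - (F ((t+s)+α) - F (t+s))| := by ring_nf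
      _ ≤ |F ((t+s)+α) - F t| + |F ((t+s)+α) - F (t+s)| := abs_sub _ _
      _ ≤ N + N := add_le_add h1 h2
      _ = 2*N := by ring
  -- n-step windows
  have steps : ∀ n : ℕ, ∀ t, 0 ≤ t → |F (t + n*δ) - F t| ≤ 2*N*n := by
    intro n
    induction n with
    | zero => intro t ht; simp
    | succ n ih =>
      intro t ht
      have h1 := ih t ht
      have h2 : |F ((t+n*δ)+δ) - F (t+n*δ)| ≤ 2*N := by
        refine small δ hδ.le le_rfl (t+n*δ) (by positivity)
      have he : t + (n+1 : ℕ)*δ = (t+n*δ)+δ := by push_cast; ring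
      rw [he]
      calc |F ((t+n*δ)+δ) - F t|
          = |(F ((t+n*δ)+δ) - F (t+n*δ)) + (F (t+n*δ) - F t)| := by ring_nf
        _ ≤ _ + _ := abs_add_le _ _
        _ ≤ 2*N + 2*N*n := add_le_add h2 h1
        _ = 2*N*(n+1:ℕ) := by push_cast; ring
  -- conclusion
  refine ⟨2*N/δ + 2*N + 1, by positivity, fun t u ht hu => ?_⟩
  set n := ⌊u/δ⌋₊ with hndef
  set s := u - n*δ with hsdef
  have hs0 : 0 ≤ s := by
    have := Nat.floor_le (by positivity : (0:ℝ) ≤ u/δ)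
    rw [hsdef, hndef, sub_nonneg, ← le_div_iff₀ hδ]
    exact this
  have hsδ : s ≤ δ := by
    have := (Nat.lt_floor_add_one (u/δ)).le
    rw [hsdef, hndef]
    rw [div_le_iff₀ hδ] at this
    nlinarith [this]
  have hnu : (n:ℝ) ≤ u/δ := Nat.floor_le (by positivity)
  have h1 : |F ((t+s) + n*δ) - F (t+s)| ≤ 2*N*n := steps n (t+s) (by linarith)
  have h2 : |F (t+s) - F t| ≤ 2*N := small s hs0 hsδ t ht
  have he : t + u = (t+s) + n*δ := by rw [hsdef]; ring
  have : |F (t+u) - F t| ≤ 2*N*n + 2*N := by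
    rw [he]
    calc |F ((t+s)+n*δ) - F t|
        = |(F ((t+s)+n*δ) - F (t+s)) + (F (t+s) - F t)| := by ring_nf
      _ ≤ _ + _ := abs_add_le _ _
      _ ≤ 2*N*n + 2*N := add_le_add h1 h2
  have hNn : (0:ℝ) ≤ N := Nat.cast_nonneg N
  have hnd : (n:ℝ)*δ ≤ u := (le_div_iff₀ hδ).mp hnu
  have h3 : 2*(N:ℝ)*n ≤ 2*N/δ*u := by
    rw [div_mul_eq_mul_div, le_div_iff₀ hδ]
    calc 2*(N:ℝ)*n*δ = 2*N*(n*δ) := by ring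
      _ ≤ 2*N*u := mul_le_mul_of_nonneg_left hnd (by positivity)
  have h4 : (0:ℝ) ≤ 2*N/δ := by positivity
  nlinarith [this, h3, hNn, hu, h4]

set_option maxHeartbeats 1000000 in
/-- (B) implies (A) -/
lemma aux_B_implies_A {f : ℝ → ℝ} (hf : Continuous f)
    (hB : ∀ θ > (0:ℝ), Tendsto (fun t => ∫ s in t..(t + θ), f s) atTop (nhds 0)) :
    Tendsto (fun t => ∫ s in (0:ℝ)..t, Real.exp (s - t) * f s) atTop (nhds 0) := by
  obtain ⟨C, hC, hCb⟩ := aux_baire_bound hf hB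
  set F : ℝ → ℝ := fun t => ∫ s in (0:ℝ)..t, f s with hFdef
  have hFc : Continuous F := aux_primitive_cont hf
  have hFd : ∀ t, HasDerivAt F (f t) t := fun t => (hf.integral_hasStrictDerivAt 0 t).hasDerivAt
  have hF0 : F 0 = 0 := integral_same
  -- uniform linear bound
  have hFbd : ∀ t u : ℝ, 0 ≤ t → 0 ≤ u → |F (t+u) - F t| ≤ C * (1+u) := hCb
  -- step (i): key FTC identity
  have key1 : ∀ t : ℝ, (∫ s in (0:ℝ)..t, Real.exp (s-t) * (F s + f s)) = F t := by
    intro t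
    have hderiv : ∀ s : ℝ, HasDerivAt (fun s => Real.exp (s-t) * F s)
        (Real.exp (s-t) * (F s + f s)) s := by
      intro s
      have h1 : HasDerivAt (fun s : ℝ => Real.exp (s-t)) (Real.exp (s-t)) s := by
        simpa using ((hasDerivAt_id s).sub_const t).exp
      have := h1.mul (hFd s)
      exact this.congr_deriv (by ring)
    rw [integral_eq_sub_of_hasDerivAt (fun s _ => hderiv s)
      (((Real.continuous_exp.comp (continuous_id.sub continuous_const)).mul
        (hFc.add hf)).intervalIntegrable 0 t)]
    simp [hF0]
  -- step (iii): ∫ exp(s-t) ds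
  have key3 : ∀ t : ℝ, (∫ s in (0:ℝ)..t, Real.exp (s-t)) = 1 - Real.exp (-t) := by
    intro t
    have hderiv : ∀ s : ℝ, HasDerivAt (fun s : ℝ => Real.exp (s-t)) (Real.exp (s-t)) s :=
      fun s => by simpa using ((hasDerivAt_id s).sub_const t).exp
    rw [integral_eq_sub_of_hasDerivAt (fun s _ => hderiv s)
      ((Real.continuous_exp.comp (continuous_id.sub continuous_const)).intervalIntegrable 0 t)]
    simp
  -- step (ii)+(iv): main identity
  have main : ∀ t : ℝ, (∫ s in (0:ℝ)..t, Real.exp (s - t) * f s)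
      = Real.exp (-t) * F t + ∫ s in (0:ℝ)..t, Real.exp (s-t) * (F t - F s) := by
    intro t
    have hi1 : IntervalIntegrable (fun s => Real.exp (s-t) * F s) volume 0 t :=
      ((Real.continuous_exp.comp (continuous_id.sub continuous_const)).mul hFc).intervalIntegrable 0 t
    have hi2 : IntervalIntegrable (fun s => Real.exp (s-t) * f s) volume 0 t :=
      ((Real.continuous_exp.comp (continuous_id.sub continuous_const)).mul hf).intervalIntegrable 0 t
    have hi3 : IntervalIntegrable (fun s : ℝ => Real.exp (s-t) * F t) volume 0 t :=
      ((Real.continuous_exp.comp (continuous_id.sub continuous_const)).mul continuous_const).intervalIntegrable 0 t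
    have hsplit : (∫ s in (0:ℝ)..t, Real.exp (s-t) * (F s + f s))
        = (∫ s in (0:ℝ)..t, Real.exp (s-t) * F s) + ∫ s in (0:ℝ)..t, Real.exp (s-t) * f s := by
      rw [← integral_add hi1 hi2]; congr 1; ext s; ring
    have hsub : (∫ s in (0:ℝ)..t, Real.exp (s-t) * (F t - F s))
        = (∫ s in (0:ℝ)..t, Real.exp (s-t) * F t) - ∫ s in (0:ℝ)..t, Real.exp (s-t) * F s := by
      rw [← integral_sub hi3 hi1]; congr 1; ext s; ring
    have hconst : (∫ s in (0:ℝ)..t, Real.exp (s-t) * F t) = (1 - Real.exp (-t)) * F t := by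
      rw [← key3 t, ← intervalIntegral.integral_mul_const]
    have h2 := key1 t
    rw [hsplit] at h2
    rw [hsub, hconst]
    linarith
  -- step (v): substitution
  have subst : ∀ t : ℝ, (∫ s in (0:ℝ)..t, Real.exp (s-t) * (F t - F s))
      = ∫ u in (0:ℝ)..t, Real.exp (-u) * (F t - F (t-u)) := by
    intro t
    have hfun : (fun u => Real.exp (-u) * (F t - F (t-u)))
        = (fun u => (fun s => Real.exp (s-t) * (F t - F s)) (t-u)) := by
      funext u
      simp only []
      rw [show t-u-t = -u by ring]
    rw [hfun, integral_comp_sub_left (fun s => Real.exp (s-t) * (F t - F s)) t,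
      sub_self, sub_zero]
  -- exp bound helper
  have hexpb : ∀ u : ℝ, Real.exp (-u) * (C*(1+u)) ≤ 2*C*Real.exp (-(u/2)) := by
    intro u
    have e1 : Real.exp (-u) = Real.exp (-(u/2)) * Real.exp (-(u/2)) := by
      rw [← Real.exp_add]; ring_nf
    have e2 : Real.exp (-(u/2)) * Real.exp (u/2) = 1 := by rw [← Real.exp_add]; simp
    have h5 : u/2 + 1 ≤ Real.exp (u/2) := Real.add_one_le_exp _
    have h6 : (1+u) * Real.exp (-(u/2)) ≤ 2 := by
      calc (1+u) * Real.exp (-(u/2)) ≤ (2 * Real.exp (u/2)) * Real.exp (-(u/2)) :=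
            mul_le_mul_of_nonneg_right (by linarith) (Real.exp_pos _).le
        _ = 2 * (Real.exp (-(u/2)) * Real.exp (u/2)) := by ring
        _ = 2 := by rw [e2]; ring
    calc Real.exp (-u) * (C*(1+u)) = C * ((1+u) * Real.exp (-(u/2))) * Real.exp (-(u/2)) := by
          rw [e1]; ring
      _ ≤ C * 2 * Real.exp (-(u/2)) := by
          apply mul_le_mul_of_nonneg_right ?_ (Real.exp_pos _).le
          nlinarith
      _ = 2*C*Real.exp (-(u/2)) := by ring
  -- indicator form
  set Φ : ℝ → ℝ → ℝ := fun t u => Set.indicator (Ioc (0:ℝ) t)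
    (fun u => Real.exp (-u) * (F t - F (t-u))) u with hΦdef
  have heq2 : ∀ t : ℝ, 0 ≤ t → (∫ u in (0:ℝ)..t, Real.exp (-u) * (F t - F (t-u)))
      = ∫ u, Φ t u := by
    intro t ht
    rw [integral_of_le ht, ← MeasureTheory.integral_indicator measurableSet_Ioc]
  -- decay of exp(-t/2)
  have hhalf : Tendsto (fun t : ℝ => 2*C*Real.exp (-(t/2))) atTop (nhds 0) := by
    have := (aux_exp_tendsto (c := -(1/2 : ℝ)) (by norm_num)).const_mul (2*C)
    rw [mul_zero] at this
    exact this.congr (fun t => by rw [show -(1/2:ℝ)*t = -(t/2) by ring])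
  -- DCT
  have hDCT : Tendsto (fun t => ∫ u, Φ t u) atTop (nhds 0) := by
    have h0 : nhds (0:ℝ) = nhds (∫ u : ℝ, (0:ℝ)) := by simp
    rw [h0]
    apply MeasureTheory.tendsto_integral_filter_of_dominated_convergence
      (bound := Set.indicator (Ioi (0:ℝ)) (fun u => 2*C * Real.exp (-(u/2))))
    · filter_upwards with t
      apply AEStronglyMeasurable.indicator ?_ measurableSet_Ioc
      exact Continuous.aestronglyMeasurable (by fun_prop)
    · filter_upwards [eventually_ge_atTop (0:ℝ)] with t ht
      filter_upwards with u
      by_cases hu : u ∈ Ioc (0:ℝ) t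
      · rw [hΦdef]
        simp only [Set.indicator_of_mem hu]
        rw [Set.indicator_of_mem (mem_Ioi.mpr hu.1)]
        have htu : 0 ≤ t - u := by have := hu.2; linarith
        have hb1 : |F ((t-u)+u) - F (t-u)| ≤ C*(1+u) := hFbd (t-u) u htu hu.1.le
        rw [sub_add_cancel] at hb1
        calc ‖Real.exp (-u) * (F t - F (t-u))‖ = Real.exp (-u) * |F t - F (t-u)| := by
              rw [Real.norm_eq_abs, abs_mul, abs_of_pos (Real.exp_pos _)]
          _ ≤ Real.exp (-u) * (C*(1+u)) := mul_le_mul_of_nonneg_left hb1 (Real.exp_pos _).le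
          _ ≤ 2*C*Real.exp (-(u/2)) := hexpb u
      · rw [hΦdef]
        simp only [Set.indicator_of_notMem hu]
        rw [norm_zero]
        apply Set.indicator_nonneg
        intro v _
        positivity
    · rw [integrable_indicator_iff measurableSet_Ioi]
      have hint : IntegrableOn (fun u : ℝ => Real.exp (-(1/2) * u)) (Ioi (0:ℝ)) volume :=
        exp_neg_integrableOn_Ioi 0 (by norm_num)
      have h2 : IntegrableOn (fun u : ℝ => 2*C*Real.exp (-(1/2)*u)) (Ioi 0) volume :=
        hint.const_mul (2*C)
      exact h2.congr_fun (fun u _ => by beta_reduce; rw [show -(1/2:ℝ)*u = -(u/2) by ring]) measurableSet_Ioi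
    · filter_upwards with u
      rcases le_or_gt u 0 with hu | hu
      · apply tendsto_const_nhds.congr (fun t => ?_)
        rw [hΦdef]
        simp only []
        rw [Set.indicator_of_notMem (fun h => absurd h.1 (not_lt.mpr hu))]
      · have h1 : Tendsto (fun t => ∫ s in (t + -u)..(t + -u + u), f s) atTop (nhds 0) :=
          (hB u hu).comp (tendsto_atTop_add_const_right atTop (-u) tendsto_id)
        have h2 : Tendsto (fun t => Real.exp (-u) * (F t - F (t-u))) atTop (nhds 0) := by
          have := h1.const_mul (Real.exp (-u))
          rw [mul_zero] at this
          refine this.congr (fun t => ?_)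
          congr 1
          have hw := aux_window hf (t-u) u
          rw [sub_add_cancel] at hw
          rw [show t + -u + u = t from by ring, show t + -u = t - u from by ring]
          exact hw.symm
        refine h2.congr' ?_
        filter_upwards [eventually_ge_atTop u] with t ht
        rw [hΦdef]
        simp only []
        rw [Set.indicator_of_mem (Set.mem_Ioc.mpr ⟨hu, ht⟩)]
  -- final decay of boundary term
  have hexp : Tendsto (fun t => Real.exp (-t) * F t) atTop (nhds 0) := by
    apply squeeze_zero_norm' ?_ hhalf
    filter_upwards [eventually_ge_atTop (0:ℝ)] with t ht
    have hb1 : |F (0+t) - F 0| ≤ C*(1+t) := hFbd 0 t le_rfl ht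
    rw [zero_add, hF0, sub_zero] at hb1
    calc ‖Real.exp (-t) * F t‖ = Real.exp (-t) * |F t| := by
          rw [Real.norm_eq_abs, abs_mul, abs_of_pos (Real.exp_pos _)]
      _ ≤ Real.exp (-t) * (C*(1+t)) := mul_le_mul_of_nonneg_left hb1 (Real.exp_pos _).le
      _ ≤ 2*C*Real.exp (-(t/2)) := hexpb t
  -- assemble
  have hfinal := hexp.add hDCT
  rw [add_zero] at hfinal
  refine hfinal.congr' ?_
  filter_upwards [eventually_ge_atTop (0:ℝ)] with t ht
  rw [main t, subst t, heq2 t ht]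

/-- variation of constants FTC -/
lemma aux_voc {c : ℝ} {g gd : ℝ → ℝ} (hg : Continuous g) (hgd : Continuous gd)
    (hderiv : ∀ s, 0 < s → HasDerivAt g (gd s) s) {T t : ℝ} (hT : 0 ≤ T) (hTt : T ≤ t) :
    ∫ s in T..t, Real.exp (-(c*s)) * (gd s - c * g s)
      = Real.exp (-(c*t)) * g t - Real.exp (-(c*T)) * g T := by
  apply integral_eq_sub_of_hasDeriv_right_of_le hTt
  · exact ((Real.continuous_exp.comp (continuous_const.mul continuous_id).neg).mul hg).continuousOn
  · intro s hs
    have hs0 : 0 < s := lt_of_le_of_lt hT hs.1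
    have h1 : HasDerivAt (fun u => Real.exp (-(c*u))) (-c * Real.exp (-(c*s))) s := by
      simpa [neg_mul] using aux_exp_deriv (-c) s
    have h2 := h1.mul (hderiv s hs0)
    have h3 : -c * Real.exp (-(c*s)) * g s + Real.exp (-(c*s)) * gd s
        = Real.exp (-(c*s)) * (gd s - c * g s) := by ring
    rw [h3] at h2
    exact h2.hasDerivWithinAt
  · exact ((Real.continuous_exp.comp (continuous_const.mul continuous_id).neg).mul
      (hgd.sub (continuous_const.mul hg))).intervalIntegrable T t

/-- (C) implies (B) -/
lemma aux_C_implies_B {q a b : ℝ} (hq0 : 0 < q) (hq1 : q < 1) {f x : ℝ → ℝ}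
    (hf : Continuous f) (hx : Continuous x)
    (hd : ∀ t, 0 < t → HasDerivAt x (a * x (q*t) + b * x t + f t) t)
    (hC : Tendsto x atTop (nhds 0)) :
    ∀ θ > (0:ℝ), Tendsto (fun t => ∫ s in t..(t + θ), f s) atTop (nhds 0) := by
  intro θ hθ
  rw [Metric.tendsto_atTop]
  intro ε hε
  set D : ℝ := 2 + |a| * θ + |b| * θ + 1 with hD
  have hD0 : 0 < D := by positivity
  set ε' := ε / D with hε'
  have hε'0 : 0 < ε' := by positivity
  obtain ⟨T₀, hT₀⟩ := Metric.tendsto_atTop.mp hC ε' hε'0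
  refine ⟨max (max (T₀/q) T₀) 1, fun t ht => ?_⟩
  have ht1 : (1:ℝ) ≤ t := le_trans (le_max_right _ _) ht
  have ht0 : 0 < t := lt_of_lt_of_le one_pos ht1
  have htT : T₀ ≤ t := le_trans (le_trans (le_max_right _ _) (le_max_left _ _)) ht
  have htq : T₀ ≤ q*t := by
    have : T₀/q ≤ t := le_trans (le_trans (le_max_left _ _) (le_max_left _ _)) ht
    calc T₀ = (T₀/q)*q := by field_simp
      _ ≤ t*q := mul_le_mul_of_nonneg_right this hq0.le
      _ = q*t := mul_comm _ _
  have hxs : ∀ u, T₀ ≤ u → |x u| ≤ ε' := by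
    intro u hu
    have := hT₀ u hu
    rw [Real.dist_eq, sub_zero] at this
    exact this.le
  -- FTC over [t, t+θ]
  have hftc : ∫ s in t..(t+θ), (a * x (q*s) + b * x s + f s) = x (t+θ) - x t := by
    apply integral_eq_sub_of_hasDeriv_right_of_le (by linarith)
    · exact hx.continuousOn
    · intro s hs
      exact (hd s (lt_trans ht0 hs.1)).hasDerivWithinAt
    · exact (((continuous_const.mul (hx.comp (continuous_const.mul continuous_id))).add
        (continuous_const.mul hx)).add hf).intervalIntegrable _ _
  have hint1 : IntervalIntegrable (fun s => x (q*s)) volume t (t+θ) :=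
    (hx.comp (continuous_const.mul continuous_id)).intervalIntegrable _ _
  have hint2 : IntervalIntegrable x volume t (t+θ) := hx.intervalIntegrable _ _
  have hint3 : IntervalIntegrable f volume t (t+θ) := hf.intervalIntegrable _ _
  have hsplit : ∫ s in t..(t+θ), (a * x (q*s) + b * x s + f s)
      = a * (∫ s in t..(t+θ), x (q*s)) + b * (∫ s in t..(t+θ), x s) + ∫ s in t..(t+θ), f s := by
    rw [← intervalIntegral.integral_const_mul, ← intervalIntegral.integral_const_mul, ← integral_add (hint1.const_mul a) (hint2.const_mul b),
      ← integral_add ((hint1.const_mul a).add (hint2.const_mul b)) hint3]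
  have hI1 : |∫ s in t..(t+θ), x (q*s)| ≤ ε' * θ := by
    have := intervalIntegral.norm_integral_le_of_norm_le_const (C := ε')
      (f := fun s => x (q*s)) (a := t) (b := t+θ) ?_
    · rw [Real.norm_eq_abs] at this
      refine this.trans ?_
      rw [show t+θ-t = θ by ring, abs_of_pos hθ]
    · intro s hs
      rw [Set.uIoc_of_le (by linarith : t ≤ t+θ)] at hs
      rw [Real.norm_eq_abs]
      refine hxs _ (le_trans htq ?_)
      exact mul_le_mul_of_nonneg_left hs.1.le hq0.le
  have hI2 : |∫ s in t..(t+θ), x s| ≤ ε' * θ := by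
    have := intervalIntegral.norm_integral_le_of_norm_le_const (C := ε')
      (f := x) (a := t) (b := t+θ) ?_
    · rw [Real.norm_eq_abs] at this
      refine this.trans ?_
      rw [show t+θ-t = θ by ring, abs_of_pos hθ]
    · intro s hs
      rw [Set.uIoc_of_le (by linarith : t ≤ t+θ)] at hs
      rw [Real.norm_eq_abs]
      exact hxs _ (le_trans htT hs.1.le)
  have hend : |x (t+θ)| ≤ ε' := hxs _ (by linarith)
  have hstart : |x t| ≤ ε' := hxs _ htT
  have hval : (∫ s in t..(t+θ), f s) = x (t+θ) - x t - a * (∫ s in t..(t+θ), x (q*s))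
      - b * (∫ s in t..(t+θ), x s) := by
    rw [hsplit] at hftc; linarith
  rw [Real.dist_eq, sub_zero, hval]
  have habs : |x (t+θ) - x t - a * (∫ s in t..(t+θ), x (q*s)) - b * (∫ s in t..(t+θ), x s)|
      ≤ |x (t+θ)| + |x t| + |a| * |∫ s in t..(t+θ), x (q*s)| + |b| * |∫ s in t..(t+θ), x s| := by
    calc _ ≤ |x (t+θ) - x t - a * (∫ s in t..(t+θ), x (q*s))| + |b * (∫ s in t..(t+θ), x s)| :=
          abs_sub _ _
      _ ≤ |x (t+θ) - x t| + |a * (∫ s in t..(t+θ), x (q*s))| + |b * (∫ s in t..(t+θ), x s)| := by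
          gcongr; exact abs_sub _ _
      _ ≤ _ := by rw [abs_mul, abs_mul]; gcongr; exact abs_sub _ _
  refine lt_of_le_of_lt habs ?_
  have h1 : |a| * |∫ s in t..(t+θ), x (q*s)| ≤ |a| * (ε' * θ) :=
    mul_le_mul_of_nonneg_left hI1 (abs_nonneg a)
  have h2 : |b| * |∫ s in t..(t+θ), x s| ≤ |b| * (ε' * θ) :=
    mul_le_mul_of_nonneg_left hI2 (abs_nonneg b)
  have hfin : ε' * D = ε := by rw [hε']; field_simp
  nlinarith [hε'0]

set_option maxHeartbeats 1000000 in
/-- (A) implies (C) -/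
lemma aux_A_implies_C {q a b : ℝ} (hq0 : 0 < q) (hq1 : q < 1)
    (hb : b < 0) (hab : |a| < -b) {f x : ℝ → ℝ}
    (hf : Continuous f) (hx : Continuous x)
    (hd : ∀ t, 0 < t → HasDerivAt x (a * x (q*t) + b * x t + f t) t)
    (hA : Tendsto (fun t => ∫ s in (0:ℝ)..t, Real.exp (s - t) * f s) atTop (nhds 0)) :
    Tendsto x atTop (nhds 0) := by
  have hbne : b ≠ 0 := hb.ne
  have hnb : 0 < -b := by linarith
  set κ := |a| / (-b) with hκdef
  have hκ0 : 0 ≤ κ := by positivity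
  have hκ1 : κ < 1 := (div_lt_one hnb).mpr hab
  -- the function y as exp(-t) * primitive
  set W : ℝ → ℝ := fun t => ∫ s in (0:ℝ)..t, Real.exp s * f s with hWdef
  have hWc : Continuous W := aux_primitive_cont (Real.continuous_exp.mul hf)
  set yy : ℝ → ℝ := fun t => Real.exp (-t) * W t with hyydef
  have hyyc : Continuous yy := (Real.continuous_exp.comp continuous_neg).mul hWc
  have hyy0 : yy 0 = 0 := by simp [hyydef, hWdef, integral_same]
  have hyyA : Tendsto yy atTop (nhds 0) := by
    refine hA.congr (fun t => ?_)
    rw [hyydef]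
    simp only []
    rw [hWdef]
    simp only []
    rw [← intervalIntegral.integral_const_mul]
    apply integral_congr
    intro s _
    show Real.exp (s - t) * f s = Real.exp (-t) * (Real.exp s * f s)
    rw [show Real.exp (-t) * (Real.exp s * f s) = (Real.exp (-t) * Real.exp s) * f s from by ring,
      ← Real.exp_add, show -t + s = s - t from by ring]
  have hyyd : ∀ s : ℝ, HasDerivAt yy (f s - yy s) s := by
    intro s
    have h1 : HasDerivAt (fun u : ℝ => Real.exp (-u)) (Real.exp (-s) * -1) s :=
      ((hasDerivAt_id s).neg).exp
    have hW : HasDerivAt W (Real.exp s * f s) s :=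
      ((Real.continuous_exp.mul hf).integral_hasStrictDerivAt 0 s).hasDerivAt
    have h2 := h1.mul hW
    have e : Real.exp (-s) * Real.exp s = 1 := by rw [← Real.exp_add]; simp
    have h3 : Real.exp (-s) * -1 * W s + Real.exp (-s) * (Real.exp s * f s)
        = f s - yy s := by
      rw [hyydef]
      simp only []
      calc Real.exp (-s) * -1 * W s + Real.exp (-s) * (Real.exp s * f s)
          = (Real.exp (-s) * Real.exp s) * f s - Real.exp (-s) * W s := by ring
        _ = f s - Real.exp (-s) * W s := by rw [e]; ring
    rw [h3] at h2
    exact h2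
  -- the function z
  set P : ℝ → ℝ := fun t => ∫ s in (0:ℝ)..t, Real.exp (-(b*s)) * f s with hPdef
  have hPc : Continuous P :=
    aux_primitive_cont ((Real.continuous_exp.comp (continuous_const.mul continuous_id).neg).mul hf)
  set zz : ℝ → ℝ := fun t => Real.exp (b*t) * P t with hzzdef
  have hzzc : Continuous zz := (Real.continuous_exp.comp (continuous_const.mul continuous_id)).mul hPc
  have hzz0 : zz 0 = 0 := by simp [hzzdef, hPdef, integral_same]
  -- z → 0
  have hzzA : Tendsto zz atTop (nhds 0) := by
    obtain ⟨H, hH0, hHb⟩ := aux_bounded_of_tendsto hyyc hyyA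
    have hconv := aux_conv_tendsto hb hyyc hHb hyyA
    have hzz_eq : ∀ t, 0 ≤ t → zz t
        = yy t + (1+b) * (Real.exp (b*t) * ∫ s in (0:ℝ)..t, Real.exp (-(b*s)) * yy s) := by
      intro t ht
      have hvoc := aux_voc (c := b) hyyc (hf.sub hyyc) (fun s _ => hyyd s) le_rfl ht
      have hint1 : IntervalIntegrable (fun s => Real.exp (-(b*s)) * f s) volume 0 t :=
        ((Real.continuous_exp.comp (continuous_const.mul continuous_id).neg).mul hf).intervalIntegrable _ _
      have hint2 : IntervalIntegrable (fun s => Real.exp (-(b*s)) * yy s) volume 0 t :=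
        ((Real.continuous_exp.comp (continuous_const.mul continuous_id).neg).mul hyyc).intervalIntegrable _ _
      have hsplit : ∫ s in (0:ℝ)..t, Real.exp (-(b*s)) * ((f s - yy s) - b * yy s)
          = P t - (1+b) * ∫ s in (0:ℝ)..t, Real.exp (-(b*s)) * yy s := by
        rw [hPdef]
        simp only []
        rw [← intervalIntegral.integral_const_mul, ← integral_sub hint1 (hint2.const_mul (1+b))]
        apply integral_congr
        intro s _
        simp only []
        ring
      simp only [Pi.sub_apply] at hvoc
      rw [hsplit, hyy0] at hvoc
      -- hvoc : P t - (1+b) * ∫ ... = exp(-(b*t)) * yy t - exp(-(b*0)) * 0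
      have e1 : Real.exp (b*t) * Real.exp (-(b*t)) = 1 := by rw [← Real.exp_add]; simp
      have e2 : P t = Real.exp (-(b*t)) * yy t + (1+b) * ∫ s in (0:ℝ)..t, Real.exp (-(b*s)) * yy s := by
        simp only [mul_zero, sub_zero] at hvoc
        linarith
      rw [hzzdef]
      simp only []
      rw [e2]
      calc Real.exp (b*t) * (Real.exp (-(b*t)) * yy t + (1+b) * ∫ s in (0:ℝ)..t, Real.exp (-(b*s)) * yy s)
          = (Real.exp (b*t) * Real.exp (-(b*t))) * yy t
            + (1+b) * (Real.exp (b*t) * ∫ s in (0:ℝ)..t, Real.exp (-(b*s)) * yy s) := by ring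
        _ = _ := by rw [e1]; ring
    have hlim2 := hyyA.add ((hconv.const_mul (1+b)))
    rw [mul_zero, add_zero] at hlim2
    refine hlim2.congr' ?_
    filter_upwards [eventually_ge_atTop (0:ℝ)] with t ht
    exact (hzz_eq t ht).symm
  obtain ⟨Z, hZ0, hZb⟩ := aux_bounded_of_tendsto hzzc hzzA
  -- representation formula
  have rep : ∀ T t : ℝ, 0 ≤ T → T ≤ t →
      x t = Real.exp (b*(t-T)) * (x T - zz T)
        + a * (Real.exp (b*t) * ∫ s in T..t, Real.exp (-(b*s)) * x (q*s)) + zz t := by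
    intro T t hT hTt
    have hgd : Continuous (fun s => a * x (q*s) + b * x s + f s) :=
      ((continuous_const.mul (hx.comp (continuous_const.mul continuous_id))).add
        (continuous_const.mul hx)).add hf
    have hvoc := aux_voc (c := b) hx hgd hd hT hTt
    have hint1 : IntervalIntegrable (fun s => Real.exp (-(b*s)) * x (q*s)) volume T t :=
      ((Real.continuous_exp.comp (continuous_const.mul continuous_id).neg).mul
        (hx.comp (continuous_const.mul continuous_id))).intervalIntegrable _ _
    have hintf : ∀ u v : ℝ, IntervalIntegrable (fun s => Real.exp (-(b*s)) * f s) volume u v :=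
      fun u v => ((Real.continuous_exp.comp (continuous_const.mul continuous_id).neg).mul
        hf).intervalIntegrable _ _
    have hsplit : ∫ s in T..t, Real.exp (-(b*s)) * ((a * x (q*s) + b * x s + f s) - b * x s)
        = a * (∫ s in T..t, Real.exp (-(b*s)) * x (q*s)) + (P t - P T) := by
      have hPdiff : P t - P T = ∫ s in T..t, Real.exp (-(b*s)) * f s := by
        rw [hPdef]
        simp only []
        rw [← integral_add_adjacent_intervals (hintf 0 T) (hintf T t)]
        ring
      rw [hPdiff, ← intervalIntegral.integral_const_mul, ← integral_add (hint1.const_mul a) (hintf T t)]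
      apply integral_congr
      intro s _
      simp only []
      ring
    rw [hsplit] at hvoc
    -- hvoc : a * I + (P t - P T) = exp(-(b*t)) * x t - exp(-(b*T)) * x T
    have e1 : Real.exp (b*t) * Real.exp (-(b*t)) = 1 := by rw [← Real.exp_add]; simp
    have eT : Real.exp (b*t) * Real.exp (-(b*T)) = Real.exp (b*(t-T)) := by
      rw [← Real.exp_add]; ring_nf
    have eT2 : Real.exp (b*(t-T)) * Real.exp (b*T) = Real.exp (b*t) := by
      rw [← Real.exp_add]; ring_nf
    have hxt : x t = (Real.exp (b*t) * Real.exp (-(b*t))) * x t := by rw [e1]; ring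
    rw [hzzdef]
    simp only []
    calc x t = (Real.exp (b*t) * Real.exp (-(b*t))) * x t := hxt
      _ = Real.exp (b*t) * (Real.exp (-(b*t)) * x t) := by ring
      _ = Real.exp (b*t) * (Real.exp (-(b*T)) * x T
            + (a * (∫ s in T..t, Real.exp (-(b*s)) * x (q*s)) + (P t - P T))) := by
          congr 1
          linarith
      _ = _ := by linear_combination (x T) * eT + (P T) * eT2
  -- global bound
  have hxbd : ∀ t, 0 ≤ t → |x t| ≤ (|x 0| + Z) / (1 - κ) := by
    intro T hT
    obtain ⟨t₀, ht₀mem, ht₀max⟩ := isCompact_Icc.exists_isMaxOn (⟨0, le_rfl, hT⟩ :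
      (Icc (0:ℝ) T).Nonempty) (hx.abs.continuousOn)
    have hmax : ∀ s ∈ Icc (0:ℝ) T, |x s| ≤ |x t₀| := fun s hs => ht₀max hs
    set M := |x t₀| with hMdef
    have hM0 : 0 ≤ M := abs_nonneg _
    have hrep := rep 0 t₀ le_rfl ht₀mem.1
    rw [hzz0] at hrep
    have hwb : |Real.exp (b*t₀) * ∫ s in (0:ℝ)..t₀, Real.exp (-(b*s)) * x (q*s)| ≤ M / (-b) := by
      refine aux_weighted_bound hb ht₀mem.1 hM0
        (hx.comp (continuous_const.mul continuous_id)) (fun s hs1 hs2 => ?_)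
      refine hmax _ ⟨by positivity, ?_⟩
      nlinarith [ht₀mem.2]
    have hzt : |zz t₀| ≤ Z := hZb _ ht₀mem.1
    have hebd : Real.exp (b*t₀) ≤ 1 := by
      rw [Real.exp_le_one_iff]
      nlinarith [ht₀mem.1]
    have htri : M ≤ Real.exp (b*t₀) * |x 0 - 0| + |a| * |Real.exp (b*t₀)
        * ∫ s in (0:ℝ)..t₀, Real.exp (-(b*s)) * x (q*s)| + |zz t₀| := by
      rw [hMdef, hrep]
      calc |Real.exp (b*(t₀-0)) * (x 0 - 0)
            + a * (Real.exp (b*t₀) * ∫ s in (0:ℝ)..t₀, Real.exp (-(b*s)) * x (q*s)) + zz t₀|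
          ≤ |Real.exp (b*(t₀-0)) * (x 0 - 0)
            + a * (Real.exp (b*t₀) * ∫ s in (0:ℝ)..t₀, Real.exp (-(b*s)) * x (q*s))| + |zz t₀| :=
            abs_add_le _ _
        _ ≤ |Real.exp (b*(t₀-0)) * (x 0 - 0)|
            + |a * (Real.exp (b*t₀) * ∫ s in (0:ℝ)..t₀, Real.exp (-(b*s)) * x (q*s))| + |zz t₀| := by
            gcongr; exact abs_add_le _ _
        _ = Real.exp (b*t₀) * |x 0 - 0| + |a| * |Real.exp (b*t₀)
            * ∫ s in (0:ℝ)..t₀, Real.exp (-(b*s)) * x (q*s)| + |zz t₀| := by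
            rw [sub_zero, abs_mul, abs_mul, abs_of_pos (Real.exp_pos _)]
    have hM : M ≤ |x 0| + Z + κ * M := by
      have h1 : |a| * |Real.exp (b*t₀) * ∫ s in (0:ℝ)..t₀, Real.exp (-(b*s)) * x (q*s)|
          ≤ |a| * (M / (-b)) := mul_le_mul_of_nonneg_left hwb (abs_nonneg a)
      have h2 : |a| * (M / (-b)) = κ * M := by rw [hκdef]; ring
      have h3 : Real.exp (b*t₀) * |x 0 - 0| ≤ |x 0| := by
        rw [sub_zero]
        nlinarith [abs_nonneg (x 0)]
      linarith
    have hfinalM : M ≤ (|x 0| + Z)/(1-κ) := by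
      rw [le_div_iff₀ (by linarith)]
      nlinarith
    exact le_trans (hmax T ⟨hT, le_rfl⟩) hfinalM
  set B := (|x 0| + Z)/(1-κ) with hBdef
  have hB0 : 0 ≤ B := le_trans (abs_nonneg (x 0)) (hxbd 0 le_rfl)
  -- contraction step
  have claimA : ∀ c, 0 ≤ c → (∀ᶠ t in atTop, |x t| ≤ c) →
      ∀ ε > 0, ∀ᶠ t in atTop, |x t| ≤ κ*c + ε := by
    intro c hc hev ε hε
    obtain ⟨T₁, hT₁⟩ := eventually_atTop.mp hev
    set T := max (max T₁ (T₁/q)) 0 with hTdef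
    have hT0 : (0:ℝ) ≤ T := le_max_right _ _
    have hTT₁ : T₁ ≤ T := le_trans (le_max_left _ _) (le_max_left _ _)
    have hTq : ∀ s, T ≤ s → T₁ ≤ q*s := by
      intro s hs
      have h1 : T₁/q ≤ s := le_trans (le_trans (le_max_right _ _) (le_max_left _ _)) hs
      calc T₁ = (T₁/q)*q := by field_simp
        _ ≤ s*q := mul_le_mul_of_nonneg_right h1 hq0.le
        _ = q*s := mul_comm _ _
    have hexp1 : Tendsto (fun t => Real.exp (b*(t-T)) * (B + Z + 1)) atTop (nhds 0) := by
      have h2 := ((aux_exp_tendsto hb).comp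
        (tendsto_atTop_add_const_right atTop (-T) tendsto_id)).mul_const (B + Z + 1)
      rw [zero_mul] at h2
      refine h2.congr (fun t => ?_)
      simp only [Function.comp, id_eq]
      rw [show t + -T = t - T from by ring]
    have hev1 : ∀ᶠ t in atTop, Real.exp (b*(t-T)) * (B + Z + 1) < ε/2 :=
      hexp1.eventually (Filter.Tendsto.eventually_lt_const (by positivity) tendsto_id)
    have hev2 : ∀ᶠ t in atTop, |zz t| < ε/2 := by
      have h := hzzA.abs
      rw [abs_zero] at h
      exact h.eventually (Filter.Tendsto.eventually_lt_const (by positivity) tendsto_id)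
    filter_upwards [eventually_ge_atTop T, hev1, hev2] with t ht h1 h2
    have hrep := rep T t hT0 ht
    have hwb : |Real.exp (b*t) * ∫ s in T..t, Real.exp (-(b*s)) * x (q*s)| ≤ c/(-b) :=
      aux_weighted_bound hb ht hc (hx.comp (continuous_const.mul continuous_id))
        (fun s hs1 hs2 => hT₁ _ (hTq s hs1))
    have hxT : |x T| ≤ B := hxbd T hT0
    have hzT : |zz T| ≤ Z := hZb T hT0
    have hTbd : |x T - zz T| ≤ B + Z := by
      calc |x T - zz T| ≤ |x T| + |zz T| := abs_sub _ _
        _ ≤ B + Z := add_le_add hxT hzT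
    have htri : |x t| ≤ Real.exp (b*(t-T)) * |x T - zz T|
        + |a| * |Real.exp (b*t) * ∫ s in T..t, Real.exp (-(b*s)) * x (q*s)| + |zz t| := by
      rw [hrep]
      calc |Real.exp (b*(t-T)) * (x T - zz T)
            + a * (Real.exp (b*t) * ∫ s in T..t, Real.exp (-(b*s)) * x (q*s)) + zz t|
          ≤ |Real.exp (b*(t-T)) * (x T - zz T)
            + a * (Real.exp (b*t) * ∫ s in T..t, Real.exp (-(b*s)) * x (q*s))| + |zz t| :=
            abs_add_le _ _
        _ ≤ |Real.exp (b*(t-T)) * (x T - zz T)|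
            + |a * (Real.exp (b*t) * ∫ s in T..t, Real.exp (-(b*s)) * x (q*s))| + |zz t| := by
            gcongr; exact abs_add_le _ _
        _ = _ := by rw [abs_mul, abs_mul, abs_of_pos (Real.exp_pos _)]
    have hm1 : Real.exp (b*(t-T)) * |x T - zz T| ≤ Real.exp (b*(t-T)) * (B+Z+1) := by
      apply mul_le_mul_of_nonneg_left ?_ (Real.exp_pos _).le
      linarith
    have hm2 : |a| * |Real.exp (b*t) * ∫ s in T..t, Real.exp (-(b*s)) * x (q*s)| ≤ κ * c := by
      have := mul_le_mul_of_nonneg_left hwb (abs_nonneg a)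
      refine this.trans_eq ?_
      rw [hκdef]; ring
    linarith
  -- iteration
  have iter : ∀ n : ℕ, ∀ ε > 0, ∀ᶠ t in atTop, |x t| ≤ κ^n * B + ε := by
    intro n
    induction n with
    | zero =>
      intro ε hε
      filter_upwards [eventually_ge_atTop (0:ℝ)] with t ht
      have hbb := hxbd t ht
      rw [pow_zero, one_mul]
      linarith
    | succ n ih =>
      intro ε hε
      have h1 := ih (ε/2) (by positivity)
      have h2 := claimA (κ^n*B + ε/2) (by positivity) h1 (ε/2) (by positivity)
      filter_upwards [h2] with t ht
      have hp : κ*(κ^n*B + ε/2) + ε/2 ≤ κ^(n+1)*B + ε := by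
        rw [pow_succ]
        nlinarith [pow_nonneg hκ0 n]
      linarith
  rw [Metric.tendsto_atTop]
  intro ε hε
  have hpow : Tendsto (fun n : ℕ => κ^n * B) atTop (nhds 0) := by
    have h := (tendsto_pow_atTop_nhds_zero_of_lt_one hκ0 hκ1).mul_const B
    rwa [zero_mul] at h
  obtain ⟨n, hn⟩ := (hpow.eventually
    (Filter.Tendsto.eventually_lt_const (by positivity : (0:ℝ) < ε/2) tendsto_id)).exists
  rw [id_eq] at hn
  obtain ⟨T₂, hT₂⟩ := eventually_atTop.mp (iter n (ε/4) (by positivity))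
  refine ⟨T₂, fun t ht => ?_⟩
  rw [Real.dist_eq, sub_zero]
  have := hT₂ t ht
  linarith

/-- Characterisation of asymptotic stability for the forced pantograph equation:
with `y(t) = ∫₀ᵗ e^{-(t-s)} f(s) ds`, the statements (A) `y(t) → 0`,
(B) `∫ₜ^{t+θ} f → 0` for every `θ > 0`, and (C) `x(t) → 0` are equivalent. -/
theorem pantograph_stability_characterisation
    (q a b ζ : ℝ)
    (hq0 : 0 < q) (hq1 : q < 1)
    (ha : a ≠ 0) (hb : b < 0) (hab : |a| < |b|)
    (f x y : ℝ → ℝ)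
    (hf : ContinuousOn f (Set.Ici 0))
    (hxc : ContinuousOn x (Set.Ici 0))
    (hx0 : x 0 = ζ)
    (hx : ∀ t > 0, HasDerivAt x (a * x (q * t) + b * x t + f t) t)
    (hy : ∀ t, y t = ∫ s in (0 : ℝ)..t, Real.exp (-(t - s)) * f s) :
    (Tendsto y atTop (nhds 0) ↔
      ∀ θ > (0 : ℝ), Tendsto (fun t => ∫ s in t..(t + θ), f s) atTop (nhds 0)) ∧
    (Tendsto y atTop (nhds 0) ↔ Tendsto x atTop (nhds 0)) := by
  have hab' : |a| < -b := by rwa [abs_of_neg hb] at hab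
  set fc : ℝ → ℝ := fun s => f (max s 0) with hfcdef
  set xc : ℝ → ℝ := fun s => x (max s 0) with hxcdef
  have hfc : Continuous fc :=
    hf.comp_continuous (continuous_id.max continuous_const) (fun s => Set.mem_Ici.mpr (le_max_right _ _))
  have hxcc : Continuous xc :=
    hxc.comp_continuous (continuous_id.max continuous_const) (fun s => Set.mem_Ici.mpr (le_max_right _ _))
  have hfc_eq : ∀ s, 0 ≤ s → fc s = f s := fun s hs => by rw [hfcdef]; simp [max_eq_left hs]
  have hxc_eq : ∀ s, 0 ≤ s → xc s = x s := fun s hs => by rw [hxcdef]; simp [max_eq_left hs]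
  -- derivative transfer
  have hxcd : ∀ t, 0 < t → HasDerivAt xc (a * xc (q*t) + b * xc t + fc t) t := by
    intro t ht
    have hev : x =ᶠ[nhds t] xc := by
      filter_upwards [isOpen_Ioi.mem_nhds ht] with s hs
      exact (hxc_eq s (le_of_lt hs)).symm
    have h1 := (hx t ht).congr_of_eventuallyEq hev.symm
    have e1 : xc (q*t) = x (q*t) := hxc_eq _ (by positivity)
    have e2 : xc t = x t := hxc_eq _ ht.le
    have e3 : fc t = f t := hfc_eq _ ht.le
    rw [e1, e2, e3]
    exact h1
  -- window transfer
  have hwin : ∀ θ : ℝ, 0 < θ →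
      (fun t => ∫ s in t..(t+θ), f s) =ᶠ[atTop] (fun t => ∫ s in t..(t+θ), fc s) := by
    intro θ hθ
    filter_upwards [eventually_ge_atTop (0:ℝ)] with t ht
    apply integral_congr
    intro s hs
    rw [Set.uIcc_of_le (by linarith : t ≤ t+θ)] at hs
    exact (hfc_eq s (le_trans ht hs.1)).symm
  have hBiff : (∀ θ > (0:ℝ), Tendsto (fun t => ∫ s in t..(t + θ), f s) atTop (nhds 0)) ↔
      (∀ θ > (0:ℝ), Tendsto (fun t => ∫ s in t..(t + θ), fc s) atTop (nhds 0)) := by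
    constructor <;> intro h θ hθ
    · exact (h θ hθ).congr' (hwin θ hθ)
    · exact (h θ hθ).congr' (hwin θ hθ).symm
  -- y transfer
  have hyiff : Tendsto y atTop (nhds 0) ↔
      Tendsto (fun t => ∫ s in (0:ℝ)..t, Real.exp (s - t) * fc s) atTop (nhds 0) := by
    apply tendsto_congr'
    filter_upwards [eventually_ge_atTop (0:ℝ)] with t ht
    rw [hy t]
    apply integral_congr
    intro s hs
    rw [Set.uIcc_of_le ht] at hs
    show Real.exp (-(t-s)) * f s = Real.exp (s-t) * fc s
    rw [hfc_eq s hs.1, show -(t-s) = s - t from by ring]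
  -- x transfer
  have hxiff : Tendsto x atTop (nhds 0) ↔ Tendsto xc atTop (nhds 0) := by
    apply tendsto_congr'
    filter_upwards [eventually_ge_atTop (0:ℝ)] with t ht
    exact (hxc_eq t ht).symm
  have AtoC : Tendsto y atTop (nhds 0) → Tendsto x atTop (nhds 0) := fun hA =>
    hxiff.mpr (aux_A_implies_C hq0 hq1 hb hab' hfc hxcc hxcd (hyiff.mp hA))
  have CtoB : Tendsto x atTop (nhds 0) →
      (∀ θ > (0:ℝ), Tendsto (fun t => ∫ s in t..(t + θ), fc s) atTop (nhds 0)) := fun hC =>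
    aux_C_implies_B hq0 hq1 hfc hxcc hxcd (hxiff.mp hC)
  have BtoA : (∀ θ > (0:ℝ), Tendsto (fun t => ∫ s in t..(t + θ), fc s) atTop (nhds 0)) →
      Tendsto y atTop (nhds 0) := fun hB => hyiff.mpr (aux_B_implies_A hfc hB)
  constructor
  · constructor
    · intro hA
      exact hBiff.mpr (CtoB (AtoC hA))
    · intro hB
      exact BtoA (hBiff.mp hB)
  · constructor
    · exact AtoC
    · intro hC
      exact BtoA (CtoB hC)
end

section
/- Let q ∈ (0,1), a ≠ 0, b < 0 with |a| < |b|. Let f : [0,∞) → ℝ be continuous, let x be a solution of x'(t) = a·x(q·t) + b·x(t) + f(t) for t > 0 with x(0) = ζ ∈ ℝ, and let y(t) := ∫₀ᵗ e^{-(t-s)} f(s) ds. Then the following are equivalent: (A) y is bounded on [0,∞); (B) there exists F ≥ 0 such that |∫ₜ^{t+θ} f(s) ds| ≤ F for all θ ∈ [0,1] and all t ≥ 0; (C) x is bounded on [0,∞). -/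
open Real Filter Set MeasureTheory intervalIntegral

/-- linear growth of integrals from unit-interval bounds -/
lemma aux_int_lin (g : ℝ → ℝ) (hg : Continuous g) (F : ℝ) (hF : 0 ≤ F)
    (h : ∀ θ ∈ Set.Icc (0:ℝ) 1, ∀ t ≥ (0:ℝ), |∫ s in t..(t + θ), g s| ≤ F) :
    ∀ s t : ℝ, 0 ≤ s → s ≤ t → |∫ u in s..t, g u| ≤ F * (t - s + 1) := by
  have key : ∀ n : ℕ, ∀ s t : ℝ, 0 ≤ s → s ≤ t → t - s ≤ n + 1 →
      |∫ u in s..t, g u| ≤ F * (n + 1) := by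
    intro n
    induction n with
    | zero =>
      intro s t hs hst hd
      have h1 : t - s ∈ Set.Icc (0:ℝ) 1 := ⟨by linarith, by norm_num at hd; linarith⟩
      have := h (t - s) h1 s hs
      rw [show s + (t - s) = t by ring] at this
      simpa using this
    | succ n ih =>
      intro s t hs hst hd
      by_cases hc : t - s ≤ n + 1
      · have := ih s t hs hst hc
        have : F * (n + 1) ≤ F * (n + 1 + 1) := by nlinarith
        push_cast
        linarith [ih s t hs hst hc]
      · push_neg at hc
        have hs1 : s + 1 ≤ t := by linarith
        have hsplit : (∫ u in s..(s+1), g u) + ∫ u in (s+1)..t, g u = ∫ u in s..t, g u :=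
          integral_add_adjacent_intervals (hg.intervalIntegrable _ _) (hg.intervalIntegrable _ _)
        have h1 : |∫ u in s..(s+1), g u| ≤ F := h 1 (by norm_num) s hs
        have h2 : |∫ u in (s+1)..t, g u| ≤ F * (n + 1) := by
          apply ih (s+1) t (by linarith) hs1
          push_cast at hd ⊢; linarith
        calc |∫ u in s..t, g u| ≤ |∫ u in s..(s+1), g u| + |∫ u in (s+1)..t, g u| := by
              rw [← hsplit]; exact abs_add_le _ _
          _ ≤ F + F * (n + 1) := by linarith
          _ ≤ F * ((n:ℝ) + 1 + 1) := by linarith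
          _ = F * ((n+1:ℕ) + 1) := by push_cast; ring
  intro s t hs hst
  have h0 : (0:ℝ) ≤ t - s := by linarith
  have := key ⌊t - s⌋₊ s t hs hst (le_of_lt (Nat.lt_floor_add_one _))
  have h2 : (⌊t - s⌋₊ : ℝ) ≤ t - s := Nat.floor_le h0
  calc |∫ u in s..t, g u| ≤ F * (⌊t - s⌋₊ + 1) := this
    _ ≤ F * (t - s + 1) := by nlinarith
lemma aux_BtoA (g : ℝ → ℝ) (hg : Continuous g) (F : ℝ) (hF : 0 ≤ F)
    (h : ∀ θ ∈ Set.Icc (0:ℝ) 1, ∀ t ≥ (0:ℝ), |∫ s in t..(t + θ), g s| ≤ F) :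
    ∀ t ≥ (0:ℝ), |Real.exp (-t) * ∫ s in (0:ℝ)..t, Real.exp s * g s| ≤ 2 * F := by
  have hlin := aux_int_lin g hg F hF h
  intro t ht
  set P : ℝ → ℝ := fun s => ∫ u in (0:ℝ)..s, g u with hPdef
  have hPd : ∀ s : ℝ, HasDerivAt P (g s) s := fun s =>
    integral_hasDerivAt_right (hg.intervalIntegrable _ _)
      hg.stronglyMeasurable.stronglyMeasurableAtFilter hg.continuousAt
  have hPc : Continuous P := continuous_iff_continuousAt.mpr fun s => (hPd s).continuousAt
  -- integration by parts
  have hHd : ∀ s : ℝ, HasDerivAt (fun u => Real.exp u * P u)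
      (Real.exp s * P s + Real.exp s * g s) s := fun s =>
    (Real.hasDerivAt_exp s).mul (hPd s)
  have hintPe : Continuous fun s => Real.exp s * P s := Real.continuous_exp.mul hPc
  have hibp : ∫ s in (0:ℝ)..t, (Real.exp s * P s + Real.exp s * g s)
      = Real.exp t * P t := by
    rw [integral_eq_sub_of_hasDerivAt (fun s _ => hHd s)
      (((hintPe.add (Real.continuous_exp.mul hg))).intervalIntegrable _ _)]
    simp [hPdef]
  have hsplit : (∫ s in (0:ℝ)..t, Real.exp s * P s) + ∫ s in (0:ℝ)..t, Real.exp s * g s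
      = Real.exp t * P t := by
    rw [← integral_add (hintPe.intervalIntegrable _ _)
      ((show Continuous fun s => Real.exp s * g s from Real.continuous_exp.mul hg).intervalIntegrable _ _)]
    exact hibp
  -- key identity
  have hid : (∫ s in (0:ℝ)..t, Real.exp s * g s)
      = (∫ s in (0:ℝ)..t, Real.exp s * (P t - P s)) + P t := by
    have h1 : (∫ s in (0:ℝ)..t, Real.exp s * (P t - P s))
        = (Real.exp t - 1) * P t - ∫ s in (0:ℝ)..t, Real.exp s * P s := by
      have : (∫ s in (0:ℝ)..t, Real.exp s * (P t - P s))
          = (∫ s in (0:ℝ)..t, Real.exp s * P t) - ∫ s in (0:ℝ)..t, Real.exp s * P s := by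
        rw [← integral_sub ((show Continuous fun s => Real.exp s * P t from Real.continuous_exp.mul continuous_const).intervalIntegrable _ _)
          (hintPe.intervalIntegrable _ _)]
        congr 1; ext s; ring
      rw [this, intervalIntegral.integral_mul_const, integral_exp]
      simp
    rw [h1]; linarith
  -- bounds
  have hbd1 : |∫ s in (0:ℝ)..t, Real.exp s * (P t - P s)|
      ≤ F * (2 * Real.exp t - t - 2) := by
    have habs : |∫ s in (0:ℝ)..t, Real.exp s * (P t - P s)|
        ≤ ∫ s in (0:ℝ)..t, |Real.exp s * (P t - P s)| :=
      abs_integral_le_integral_abs ht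
    have hmono : (∫ s in (0:ℝ)..t, |Real.exp s * (P t - P s)|)
        ≤ ∫ s in (0:ℝ)..t, Real.exp s * (F * (t - s + 1)) := by
      apply integral_mono_on ht
        (((Real.continuous_exp.mul (continuous_const.sub hPc)).abs).intervalIntegrable _ _)
        ((Real.continuous_exp.mul (by continuity)).intervalIntegrable _ _)
      intro s hs
      show |Real.exp s * (P t - P s)| ≤ Real.exp s * (F * (t - s + 1))
      rw [abs_mul, abs_of_pos (Real.exp_pos s)]
      apply mul_le_mul_of_nonneg_left _ (Real.exp_pos s).le
      have heq : P t - P s = ∫ u in s..t, g u :=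
        integral_interval_sub_left (hg.intervalIntegrable 0 t)
          (hg.intervalIntegrable 0 s)
      rw [heq]
      exact hlin s t hs.1 hs.2
    have hcomp : (∫ s in (0:ℝ)..t, Real.exp s * (F * (t - s + 1)))
        = F * (2 * Real.exp t - t - 2) := by
      have hA : ∀ s : ℝ, HasDerivAt (fun u => F * (Real.exp u * (t - u + 2)))
          (Real.exp s * (F * (t - s + 1))) s := by
        intro s
        have := ((Real.hasDerivAt_exp s).mul
          ((hasDerivAt_id s).const_sub t |>.add_const 2)).const_mul F
        refine this.congr_deriv (Eq.symm ?_); simp only [id]; ring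
      rw [integral_eq_sub_of_hasDerivAt (fun s _ => hA s)
        ((Real.continuous_exp.mul (by continuity)).intervalIntegrable _ _)]
      simp; ring
    linarith
  have hbd2 : |P t| ≤ F * (t + 1) := by
    have := hlin 0 t le_rfl ht
    simpa using this
  -- combine
  rw [hid, abs_mul, abs_of_pos (Real.exp_pos (-t))]
  have : |(∫ s in (0:ℝ)..t, Real.exp s * (P t - P s)) + P t|
      ≤ F * (2 * Real.exp t - t - 2) + F * (t + 1) := (abs_add_le _ _).trans (by linarith)
  calc Real.exp (-t) * |(∫ s in (0:ℝ)..t, Real.exp s * (P t - P s)) + P t|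
      ≤ Real.exp (-t) * (F * (2 * Real.exp t - 1)) := by
        apply mul_le_mul_of_nonneg_left _ (Real.exp_pos _).le
        calc |(∫ s in (0:ℝ)..t, Real.exp s * (P t - P s)) + P t|
            ≤ F * (2 * Real.exp t - t - 2) + F * (t + 1) := this
          _ = F * (2 * Real.exp t - 1) := by ring
    _ = 2 * F - Real.exp (-t) * F := by
        rw [Real.exp_neg]
        field_simp
    _ ≤ 2 * F := by
        have := Real.exp_pos (-t)
        nlinarith

set_option maxHeartbeats 1000000 in
/-- Characterisation of boundedness for the forced pantograph equation:
with `y(t) = ∫₀ᵗ e^{-(t-s)} f(s) ds`, the statements (A) `y` bounded,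
(B) uniformly bounded moving averages of `f`, and (C) `x` bounded are
equivalent. -/
theorem pantograph_boundedness_characterisation
    (q a b ζ : ℝ)
    (hq0 : 0 < q) (hq1 : q < 1)
    (ha : a ≠ 0) (hb : b < 0) (hab : |a| < |b|)
    (f x y : ℝ → ℝ)
    (hf : ContinuousOn f (Set.Ici 0))
    (hxc : ContinuousOn x (Set.Ici 0))
    (hx0 : x 0 = ζ)
    (hx : ∀ t > 0, HasDerivAt x (a * x (q * t) + b * x t + f t) t)
    (hy : ∀ t, y t = ∫ s in (0 : ℝ)..t, Real.exp (-(t - s)) * f s) :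
    ((∃ M : ℝ, ∀ t ≥ (0 : ℝ), |y t| ≤ M) ↔
      (∃ F ≥ (0 : ℝ), ∀ θ ∈ Set.Icc (0 : ℝ) 1, ∀ t ≥ (0 : ℝ),
        |∫ s in t..(t + θ), f s| ≤ F)) ∧
    ((∃ M : ℝ, ∀ t ≥ (0 : ℝ), |y t| ≤ M) ↔
      (∃ M : ℝ, ∀ t ≥ (0 : ℝ), |x t| ≤ M)) := by
  -- extend f continuously to all of ℝ
  set fe : ℝ → ℝ := fun t => f (max t 0) with hfedef
  have hfec : Continuous fe :=
    hf.comp_continuous (continuous_id.max continuous_const) (fun t => le_max_right t 0)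
  have hfe : ∀ t : ℝ, 0 ≤ t → fe t = f t := by
    intro t ht; simp [hfedef, max_eq_left ht]
  -- smooth version of y
  set Q : ℝ → ℝ := fun t => ∫ s in (0:ℝ)..t, Real.exp s * fe s with hQdef
  have hQd : ∀ t : ℝ, HasDerivAt Q (Real.exp t * fe t) t := fun t =>
    integral_hasDerivAt_right ((Real.continuous_exp.mul hfec).intervalIntegrable _ _)
      (Real.continuous_exp.mul hfec).stronglyMeasurable.stronglyMeasurableAtFilter
      (Real.continuous_exp.mul hfec).continuousAt
  set ye : ℝ → ℝ := fun t => Real.exp (-t) * Q t with hyedef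
  have hyed : ∀ t : ℝ, HasDerivAt ye (fe t - ye t) t := by
    intro t
    have h1 : HasDerivAt (fun u : ℝ => Real.exp (-u)) (Real.exp (-t) * (-1)) t :=
      ((hasDerivAt_id t).neg).exp
    have h2 := h1.mul (hQd t)
    refine h2.congr_deriv (Eq.symm ?_)
    have he : Real.exp (-t) * Real.exp t = 1 := by
      rw [← Real.exp_add]; simp
    simp only [hyedef]
    linear_combination (-(fe t)) * he
  have hyec : Continuous ye :=
    continuous_iff_continuousAt.mpr fun t => (hyed t).continuousAt
  have hye0 : ye 0 = 0 := by simp [hyedef, hQdef]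
  have hyeq : ∀ t : ℝ, 0 ≤ t → y t = ye t := by
    intro t ht
    rw [hy t, hyedef]
    have hcg : ∀ s ∈ Set.uIcc (0:ℝ) t,
        Real.exp (-(t - s)) * f s = Real.exp (-t) * (Real.exp s * fe s) := by
      intro s hs
      rw [Set.uIcc_of_le ht] at hs
      rw [hfe s hs.1, ← mul_assoc, ← Real.exp_add]
      ring_nf
    rw [intervalIntegral.integral_congr hcg, intervalIntegral.integral_const_mul]
  -- the integral of f equals integral of fe on subintervals of [0,∞)
  have hBeq : ∀ t : ℝ, 0 ≤ t → ∀ θ : ℝ, 0 ≤ θ →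
      (∫ s in t..(t + θ), f s) = ∫ s in t..(t + θ), fe s := by
    intro t ht θ hθ
    apply intervalIntegral.integral_congr
    intro s hs
    rw [Set.uIcc_of_le (by linarith : t ≤ t + θ)] at hs
    exact (hfe s (le_trans ht hs.1)).symm
  -- (A → B)
  have hAB : (∃ M : ℝ, ∀ t ≥ (0 : ℝ), |y t| ≤ M) →
      (∃ F ≥ (0 : ℝ), ∀ θ ∈ Set.Icc (0 : ℝ) 1, ∀ t ≥ (0 : ℝ),
        |∫ s in t..(t + θ), f s| ≤ F) := by
    rintro ⟨M, hM⟩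
    have hM0 : 0 ≤ M := le_trans (abs_nonneg _) (hM 0 le_rfl)
    refine ⟨3 * M, by linarith, fun θ hθ t ht => ?_⟩
    have hylocal : ∀ s ∈ Set.Icc t (t + θ), |ye s| ≤ M := by
      intro s hs
      rw [← hyeq s (le_trans ht hs.1)]
      exact hM s (le_trans ht hs.1)
    have htθ : t ≤ t + θ := by linarith [hθ.1]
    have hftc : ∫ s in t..(t + θ), (fe s - ye s) = ye (t + θ) - ye t :=
      integral_eq_sub_of_hasDerivAt (fun s _ => hyed s)
        ((hfec.sub hyec).intervalIntegrable _ _)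
    have hsub : (∫ s in t..(t + θ), (fe s - ye s))
        = (∫ s in t..(t + θ), fe s) - ∫ s in t..(t + θ), ye s :=
      integral_sub (hfec.intervalIntegrable _ _) (hyec.intervalIntegrable _ _)
    have hyeint : |∫ s in t..(t + θ), ye s| ≤ M := by
      calc |∫ s in t..(t + θ), ye s| ≤ ∫ s in t..(t + θ), |ye s| :=
            abs_integral_le_integral_abs htθ
        _ ≤ ∫ s in t..(t + θ), M := by
            apply integral_mono_on htθ (hyec.abs.intervalIntegrable _ _)
              (continuous_const.intervalIntegrable _ _) hylocal
        _ = M * θ := by simp [mul_comm]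
        _ ≤ M := by nlinarith [hθ.2]
    rw [hBeq t ht θ hθ.1]
    have : (∫ s in t..(t + θ), fe s) = (ye (t + θ) - ye t) + ∫ s in t..(t + θ), ye s := by
      rw [← hftc, hsub]; ring
    rw [this]
    have h1 : |ye (t + θ)| ≤ M := hylocal _ ⟨htθ, le_rfl⟩
    have h2 : |ye t| ≤ M := hylocal _ ⟨le_rfl, htθ⟩
    calc |ye (t + θ) - ye t + ∫ s in t..(t + θ), ye s|
        ≤ |ye (t + θ) - ye t| + |∫ s in t..(t + θ), ye s| := abs_add_le _ _
      _ ≤ (|ye (t + θ)| + |ye t|) + M := by linarith [abs_sub (ye (t+θ)) (ye t)]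
      _ ≤ 3 * M := by linarith
  -- (C → B)
  have hCB : (∃ M : ℝ, ∀ t ≥ (0 : ℝ), |x t| ≤ M) →
      (∃ F ≥ (0 : ℝ), ∀ θ ∈ Set.Icc (0 : ℝ) 1, ∀ t ≥ (0 : ℝ),
        |∫ s in t..(t + θ), f s| ≤ F) := by
    rintro ⟨M, hM⟩
    have hM0 : 0 ≤ M := le_trans (abs_nonneg _) (hM 0 le_rfl)
    refine ⟨2 * M + (|a| + |b|) * M, by positivity, fun θ hθ t ht => ?_⟩
    have htθ : t ≤ t + θ := by linarith [hθ.1]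
    -- continuity of the pantograph right-hand side on [t, t+θ]
    have hxq : ContinuousOn (fun s => x (q * s)) (Set.Icc t (t + θ)) := by
      apply hxc.comp (continuous_const.mul continuous_id).continuousOn
      intro s hs
      exact mul_nonneg hq0.le (le_trans ht hs.1)
    have hxI : ContinuousOn x (Set.Icc t (t + θ)) :=
      hxc.mono (fun s hs => le_trans ht hs.1)
    have hrhs : ContinuousOn (fun s => a * x (q * s) + b * x s + fe s)
        (Set.Icc t (t + θ)) :=
      ((hxq.const_smul a).add (hxI.const_smul b)).add hfec.continuousOn
    have hrhsInt : IntervalIntegrable (fun s => a * x (q * s) + b * x s + fe s)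
        volume t (t + θ) := by
      apply ContinuousOn.intervalIntegrable
      rwa [Set.uIcc_of_le htθ]
    have hftc : (∫ s in t..(t + θ), (a * x (q * s) + b * x s + fe s))
        = x (t + θ) - x t := by
      apply integral_eq_sub_of_hasDeriv_right_of_le htθ hxI _ hrhsInt
      intro s hs
      have hs0 : 0 < s := lt_of_le_of_lt ht hs.1
      have := hx s hs0
      rw [← hfe s hs0.le] at this
      exact this.hasDerivWithinAt
    have hab2 : ContinuousOn (fun s => a * x (q * s) + b * x s) (Set.Icc t (t + θ)) :=
      (hxq.const_smul a).add (hxI.const_smul b)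
    have hab2I : IntervalIntegrable (fun s => a * x (q * s) + b * x s) volume t (t + θ) := by
      apply ContinuousOn.intervalIntegrable; rwa [Set.uIcc_of_le htθ]
    have hsplit : (∫ s in t..(t + θ), fe s)
        = (x (t + θ) - x t) - ∫ s in t..(t + θ), (a * x (q * s) + b * x s) := by
      rw [← hftc, ← integral_sub hrhsInt hab2I]
      congr 1; ext s; ring
    have hbd : |∫ s in t..(t + θ), (a * x (q * s) + b * x s)| ≤ (|a| + |b|) * M := by
      calc |∫ s in t..(t + θ), (a * x (q * s) + b * x s)|
          ≤ ∫ s in t..(t + θ), |a * x (q * s) + b * x s| := abs_integral_le_integral_abs htθ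
        _ ≤ ∫ s in t..(t + θ), (|a| + |b|) * M := by
            apply integral_mono_on htθ _ (continuous_const.intervalIntegrable _ _)
            · intro s hs
              have h1 : |x (q * s)| ≤ M := hM _ (mul_nonneg hq0.le (le_trans ht hs.1))
              have h2 : |x s| ≤ M := hM _ (le_trans ht hs.1)
              calc |a * x (q * s) + b * x s| ≤ |a| * |x (q * s)| + |b| * |x s| := by
                    rw [← abs_mul, ← abs_mul]; exact abs_add_le _ _
                _ ≤ (|a| + |b|) * M := by
                    nlinarith [abs_nonneg a, abs_nonneg b, abs_nonneg (x (q*s)), abs_nonneg (x s)]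
            · apply ContinuousOn.intervalIntegrable
              rw [Set.uIcc_of_le htθ]; exact hab2.abs
        _ = (|a| + |b|) * M * θ := by simp; ring
        _ ≤ (|a| + |b|) * M :=
            mul_le_of_le_one_right
              (mul_nonneg (add_nonneg (abs_nonneg a) (abs_nonneg b)) hM0) hθ.2
    rw [hBeq t ht θ hθ.1, hsplit]
    have h1 : |x (t + θ)| ≤ M := hM _ (by linarith)
    have h2 : |x t| ≤ M := hM _ ht
    calc |x (t + θ) - x t - ∫ s in t..(t + θ), (a * x (q * s) + b * x s)|
        ≤ |x (t + θ) - x t| + |∫ s in t..(t + θ), (a * x (q * s) + b * x s)| := abs_sub _ _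
      _ ≤ (|x (t + θ)| + |x t|) + (|a| + |b|) * M := by linarith [abs_sub (x (t+θ)) (x t)]
      _ ≤ 2 * M + (|a| + |b|) * M := by linarith
  -- (B → A)
  have hBA : (∃ F ≥ (0 : ℝ), ∀ θ ∈ Set.Icc (0 : ℝ) 1, ∀ t ≥ (0 : ℝ),
        |∫ s in t..(t + θ), f s| ≤ F) →
      (∃ M : ℝ, ∀ t ≥ (0 : ℝ), |y t| ≤ M) := by
    rintro ⟨F, hF0, hF⟩
    have hFe : ∀ θ ∈ Set.Icc (0:ℝ) 1, ∀ t ≥ (0:ℝ), |∫ s in t..(t + θ), fe s| ≤ F := by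
      intro θ hθ t ht
      rw [← hBeq t ht θ hθ.1]
      exact hF θ hθ t ht
    refine ⟨2 * F, fun t ht => ?_⟩
    rw [hyeq t ht]
    exact aux_BtoA fe hfec F hF0 hFe t ht
  -- (A → C)
  have hAC : (∃ M : ℝ, ∀ t ≥ (0 : ℝ), |y t| ≤ M) →
      (∃ M : ℝ, ∀ t ≥ (0 : ℝ), |x t| ≤ M) := by
    rintro ⟨M, hM⟩
    have hM0 : 0 ≤ M := le_trans (abs_nonneg _) (hM 0 le_rfl)
    have hMye : ∀ t : ℝ, 0 ≤ t → |ye t| ≤ M := by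
      intro t ht; rw [← hyeq t ht]; exact hM t ht
    have hbpos : 0 < -b := by linarith
    set κ : ℝ := |a| / (-b) with hκdef
    have hκ1 : κ < 1 := by
      rw [hκdef, div_lt_one hbpos]
      rwa [abs_of_neg hb] at hab
    have hκ0 : 0 ≤ κ := div_nonneg (abs_nonneg a) hbpos.le
    set C : ℝ := M + |ζ| + |1 + b| * M / (-b) with hCdef
    have hC0 : 0 ≤ C := by positivity
    refine ⟨C / (1 - κ), fun T hT => ?_⟩
    obtain ⟨t₀, ht₀mem, ht₀max⟩ := isCompact_Icc.exists_isMaxOn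
      (Set.nonempty_Icc.mpr hT) ((hxc.mono (fun s hs => hs.1)).abs :
        ContinuousOn (fun s => |x s|) (Set.Icc 0 T))
    have ht₀ : ∀ s ∈ Set.Icc (0:ℝ) T, |x s| ≤ |x t₀| := fun s hs => ht₀max hs
    have ht₀0 : (0:ℝ) ≤ t₀ := ht₀mem.1
    have ht₀T : t₀ ≤ T := ht₀mem.2
    set S : ℝ := |x t₀| with hSdef
    have hS0 : 0 ≤ S := abs_nonneg _
    set G : ℝ → ℝ := fun t => Real.exp (-b * t) * (x t - ye t) with hGdef
    have hGd : ∀ t : ℝ, 0 < t →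
        HasDerivAt G (Real.exp (-b * t) * (a * x (q * t) + (1 + b) * ye t)) t := by
      intro t ht
      have h1 : HasDerivAt (fun u : ℝ => Real.exp (-b * u)) (Real.exp (-b * t) * (-b * 1)) t :=
        ((hasDerivAt_id t).const_mul (-b)).exp
      have hx' := hx t ht
      rw [← hfe t ht.le] at hx'
      have h2 := h1.mul (hx'.sub (hyed t))
      refine h2.congr_deriv (Eq.symm ?_)
      simp only [Pi.sub_apply]
      ring
    have hGc : ContinuousOn G (Set.Icc 0 t₀) := by
      apply ContinuousOn.mul
      · exact (Real.continuous_exp.comp (continuous_const.mul continuous_id)).continuousOn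
      · exact ((hxc.mono (fun s hs => hs.1)).sub hyec.continuousOn)
    have hxqS : ∀ s ∈ Set.Icc (0:ℝ) t₀, |x (q * s)| ≤ S := by
      intro s hs
      apply ht₀
      constructor
      · exact mul_nonneg hq0.le hs.1
      · nlinarith [hs.1, hs.2]
    have hxqc : ContinuousOn (fun s => x (q * s)) (Set.Icc 0 t₀) := by
      apply hxc.comp (continuous_const.mul continuous_id).continuousOn
      intro s hs
      exact mul_nonneg hq0.le hs.1
    have hintc : ContinuousOn
        (fun s => Real.exp (-b * s) * (a * x (q * s) + (1 + b) * ye s)) (Set.Icc 0 t₀) := by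
      apply ContinuousOn.mul
      · exact (Real.continuous_exp.comp (continuous_const.mul continuous_id)).continuousOn
      · exact (hxqc.const_smul a).add (hyec.continuousOn.const_smul (1 + b))
    have hint : IntervalIntegrable
        (fun s => Real.exp (-b * s) * (a * x (q * s) + (1 + b) * ye s)) volume 0 t₀ := by
      apply ContinuousOn.intervalIntegrable
      rwa [Set.uIcc_of_le ht₀0]
    have hftc : (∫ s in (0:ℝ)..t₀, Real.exp (-b * s) * (a * x (q * s) + (1 + b) * ye s))
        = G t₀ - G 0 :=
      integral_eq_sub_of_hasDeriv_right_of_le ht₀0 hGc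
        (fun s hs => (hGd s hs.1).hasDerivWithinAt) hint
    have hG0 : G 0 = ζ := by simp [hGdef, hx0, hye0]
    set I : ℝ := ∫ s in (0:ℝ)..t₀, Real.exp (-b * s) * (a * x (q * s) + (1 + b) * ye s)
      with hIdef
    set c : ℝ := |a| * S + |1 + b| * M with hcdef
    have hc0 : 0 ≤ c := by positivity
    -- bound on |I|
    have hIbd : |I| ≤ (c / (-b)) * (Real.exp (-b * t₀) - 1) := by
      have habs : |I| ≤ ∫ s in (0:ℝ)..t₀,
          |Real.exp (-b * s) * (a * x (q * s) + (1 + b) * ye s)| :=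
        abs_integral_le_integral_abs ht₀0
      have hmono : (∫ s in (0:ℝ)..t₀,
          |Real.exp (-b * s) * (a * x (q * s) + (1 + b) * ye s)|)
          ≤ ∫ s in (0:ℝ)..t₀, Real.exp (-b * s) * c := by
        apply integral_mono_on ht₀0
        · apply ContinuousOn.intervalIntegrable
          rw [Set.uIcc_of_le ht₀0]; exact hintc.abs
        · exact ((Real.continuous_exp.comp (continuous_const.mul continuous_id)).mul
            continuous_const).intervalIntegrable _ _
        · intro s hs
          rw [abs_mul, abs_of_pos (Real.exp_pos _)]
          apply mul_le_mul_of_nonneg_left _ (Real.exp_pos _).le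
          calc |a * x (q * s) + (1 + b) * ye s|
              ≤ |a| * |x (q * s)| + |1 + b| * |ye s| := by
                rw [← abs_mul, ← abs_mul]; exact abs_add_le _ _
            _ ≤ c := by
                have h1 := hxqS s hs
                have h2 := hMye s hs.1
                rw [hcdef]
                nlinarith [abs_nonneg a, abs_nonneg (1 + b), abs_nonneg (x (q * s)),
                  abs_nonneg (ye s)]
      have hcomp : (∫ s in (0:ℝ)..t₀, Real.exp (-b * s) * c)
          = (c / (-b)) * (Real.exp (-b * t₀) - 1) := by
        have hA : ∀ s : ℝ, HasDerivAt (fun u => (c / (-b)) * Real.exp (-b * u))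
            (Real.exp (-b * s) * c) s := by
          intro s
          have := (((hasDerivAt_id s).const_mul (-b)).exp).const_mul (c / (-b))
          refine this.congr_deriv (Eq.symm ?_)
          simp only [id_eq, mul_one]
          rw [show c / (-b) * (Real.exp (-b * s) * (-b))
            = Real.exp (-b * s) * (c / (-b) * (-b)) from by ring,
            div_mul_cancel₀ c (ne_of_gt hbpos)]
        rw [integral_eq_sub_of_hasDerivAt (fun s _ => hA s)
          (((Real.continuous_exp.comp (continuous_const.mul continuous_id)).mul
            continuous_const).intervalIntegrable _ _)]
        simp
        ring
      linarith
    -- solve for x t₀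
    have hexp1 : Real.exp (b * t₀) * Real.exp (-b * t₀) = 1 := by
      rw [← Real.exp_add]; ring_nf; exact Real.exp_zero
    have hxt₀ : x t₀ = ye t₀ + Real.exp (b * t₀) * (ζ + I) := by
      have h1 : Real.exp (-b * t₀) * (x t₀ - ye t₀) = ζ + I := by
        have h3 : G t₀ = Real.exp (-b * t₀) * (x t₀ - ye t₀) := rfl
        linarith [hftc, hG0, h3]
      linear_combination Real.exp (b * t₀) * h1 - (x t₀ - ye t₀) * hexp1
    have hexple : Real.exp (b * t₀) ≤ 1 := by
      rw [Real.exp_le_one_iff]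
      have := mul_nonneg hbpos.le ht₀0
      nlinarith
    have hkey : Real.exp (b * t₀) * ((c / (-b)) * (Real.exp (-b * t₀) - 1)) ≤ c / (-b) := by
      have h1 : Real.exp (b * t₀) * ((c / (-b)) * (Real.exp (-b * t₀) - 1))
          = (c / (-b)) * (1 - Real.exp (b * t₀)) := by
        linear_combination (c / (-b)) * hexp1
      rw [h1]
      have hcb : 0 ≤ c / (-b) := div_nonneg hc0 hbpos.le
      nlinarith [Real.exp_pos (b * t₀)]
    have hSbd : S ≤ C + κ * S := by
      have h1 : |x t₀| ≤ |ye t₀| + Real.exp (b * t₀) * (|ζ| + |I|) := by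
        rw [hxt₀]
        calc |ye t₀ + Real.exp (b * t₀) * (ζ + I)|
            ≤ |ye t₀| + |Real.exp (b * t₀) * (ζ + I)| := abs_add_le _ _
          _ ≤ |ye t₀| + Real.exp (b * t₀) * (|ζ| + |I|) := by
              have habs2 : |Real.exp (b * t₀) * (ζ + I)|
                  ≤ Real.exp (b * t₀) * (|ζ| + |I|) := by
                rw [abs_mul, abs_of_pos (Real.exp_pos _)]
                exact mul_le_mul_of_nonneg_left (abs_add_le _ _) (Real.exp_pos _).le
              linarith
      have h2 : |ye t₀| ≤ M := hMye t₀ ht₀0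
      have h3 : Real.exp (b * t₀) * |ζ| ≤ |ζ| :=
        mul_le_of_le_one_left (abs_nonneg _) hexple
      have h4 : Real.exp (b * t₀) * |I| ≤ c / (-b) := by
        calc Real.exp (b * t₀) * |I|
            ≤ Real.exp (b * t₀) * ((c / (-b)) * (Real.exp (-b * t₀) - 1)) :=
              mul_le_mul_of_nonneg_left hIbd (Real.exp_pos _).le
          _ ≤ c / (-b) := hkey
      have h5 : c / (-b) = κ * S + |1 + b| * M / (-b) := by
        rw [hcdef, hκdef, add_div, div_mul_eq_mul_div]
      have h6 : S ≤ M + |ζ| + c / (-b) := by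
        rw [hSdef]
        calc |x t₀| ≤ |ye t₀| + Real.exp (b * t₀) * (|ζ| + |I|) := h1
          _ = |ye t₀| + Real.exp (b * t₀) * |ζ| + Real.exp (b * t₀) * |I| := by ring
          _ ≤ M + |ζ| + c / (-b) := by linarith
      rw [hCdef]
      linarith [h5 ▸ h6]
    have hSfin : S ≤ C / (1 - κ) := by
      rw [le_div_iff₀ (by linarith : (0:ℝ) < 1 - κ)]
      nlinarith
    calc |x T| ≤ S := ht₀ T ⟨hT, le_rfl⟩
      _ ≤ C / (1 - κ) := hSfin
  exact ⟨⟨hAB, fun hB => hBA hB⟩, ⟨hAC, fun hC => hBA (hCB hC)⟩⟩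
end
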